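/- arXiv:1505.02633 — 6 statements merged into one kernel-verified Lean document; each statement's English description precedes it below -/
import Mathlib

section
/- Let $f : (0,\infty) \to [0,\infty)$ be nonincreasing and let $f^{**}(t) = \frac{1}{t}\int_0^t f(s)\,ds$. Then for $1 < q < \infty$, $\left(\int_0^\infty f(t)^q\,dt\right)^{1/q} \leq \left(\frac{q-1}{q}\right)^{1/q} \left(\int_0^\infty f^{**}(t)^q\,dt\right)^{1/q}$ (the sharp reverse Hardy inequality for nonincreasing functions). -/
/-!
Write `F t = ∫₀ᵗ f` and `A t = F t / t` (this is `f^{**}`). Since `f` is nonincreasing, `f ≤ A`,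
hence `f^q ≤ f A^(q-1)`, and `A` is nonincreasing as well. Off the countably many jumps of `f` we
have `F' = f`, so `(t A^q)' = q f A^(q-1) - (q-1) A^q`; integrating over `[a, b]` gives
`q ∫_a^b f^q ≤ b A(b)^q + (q-1) ∫_a^b A^q`. As `A` is nonincreasing, the boundary term is at most
`2 ∫_{b/2}^b A^q`, which tends to `0` as `b → ∞` once `∫_0^∞ A^q < ∞`.
-/

open Set MeasureTheory Filter Topology
open scoped ENNReal

section Tail

variable {μ : Measure ℝ} {g : ℝ → ℝ≥0∞}

lemma tendsto_setLIntegral_Ioi_atTop {a : ℝ} (h : ∫⁻ t in Ioi a, g t ∂μ ≠ ∞) :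
    Tendsto (fun x => ∫⁻ t in Ioi x, g t ∂μ) atTop (𝓝 0) := by
  set ν := (μ.restrict (Ioi a)).withDensity g
  have hν : Tendsto (fun x => ν (Ioi x)) atTop (𝓝 (ν (⋂ x, Ioi x))) :=
    tendsto_measure_iInter_atTop (fun _ => measurableSet_Ioi.nullMeasurableSet)
      (fun _ _ hxy => Ioi_subset_Ioi hxy)
      ⟨a, by rwa [withDensity_apply _ measurableSet_Ioi,
        Measure.restrict_restrict_of_subset subset_rfl]⟩
  have hempty : ⋂ x : ℝ, Ioi x = ∅ := iInter_eq_empty_iff.2 fun x => ⟨x, lt_irrefl x⟩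
  rw [hempty, measure_empty] at hν
  refine hν.congr' (eventually_atTop.2 ⟨a, fun x hx => ?_⟩)
  rw [withDensity_apply _ measurableSet_Ioi,
    Measure.restrict_restrict_of_subset (Ioi_subset_Ioi hx)]

lemma setLIntegral_Ioi_le_of_forall_Ioc {C : ℝ≥0∞}
    (h : ∀ a b, 0 < a → ∫⁻ t in Ioc a b, g t ∂μ ≤ C) : ∫⁻ t in Ioi 0, g t ∂μ ≤ C := by
  have hmono : Monotone fun n : ℕ => Ioc ((n + 1 : ℝ)⁻¹) (n + 1) := fun m n hmn =>
    Ioc_subset_Ioc (inv_anti₀ (by positivity) (by gcongr)) (by gcongr)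
  have hunion : ⋃ n : ℕ, Ioc ((n + 1 : ℝ)⁻¹) (n + 1) = Ioi 0 := by
    refine subset_antisymm (iUnion_subset fun n x hx => lt_trans (by positivity) hx.1) ?_
    intro x (hx : 0 < x)
    obtain ⟨n, hn⟩ := exists_nat_gt (max x x⁻¹)
    refine mem_iUnion.2 ⟨n, inv_lt_of_inv_lt₀ hx ?_, ?_⟩
    · linarith [le_max_right x x⁻¹]
    · linarith [le_max_left x x⁻¹]
  rw [← hunion, setLIntegral_iUnion_of_directed _ hmono.directed_le]
  exact iSup_le fun n => h _ _ (by positivity)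

end Tail

section Antitone

variable {f : ℝ → ℝ} {a b : ℝ}

lemma AntitoneOn.sub_mul_le_intervalIntegral (hf : AntitoneOn f (Ioc a b)) (hab : a ≤ b)
    (hint : IntervalIntegrable f volume a b) : (b - a) * f b ≤ ∫ x in a..b, f x := by
  rw [← smul_eq_mul, ← intervalIntegral.integral_const]
  exact intervalIntegral.integral_mono_on_of_le_Ioo hab intervalIntegrable_const hint
    fun x hx => hf ⟨hx.1, hx.2.le⟩ ⟨hx.1.trans hx.2, le_rfl⟩ hx.2.le

lemma AntitoneOn.intervalIntegral_le_sub_mul (hf : AntitoneOn f (Icc a b)) (hab : a ≤ b)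
    (hint : IntervalIntegrable f volume a b) : ∫ x in a..b, f x ≤ (b - a) * f a := by
  rw [← smul_eq_mul, ← intervalIntegral.integral_const]
  exact intervalIntegral.integral_mono_on hab hint intervalIntegrable_const fun x hx =>
    hf ⟨le_rfl, hab⟩ hx hx.1

end Antitone

lemma hasDerivAt_mul_div_rpow {F : ℝ → ℝ} {F' t q : ℝ} (hF : HasDerivAt F F' t) (ht : t ≠ 0)
    (hnonneg : 0 ≤ F t / t) (hq : 1 ≤ q) :
    HasDerivAt (fun u => u * (F u / u) ^ q)
      (q * (F' * (F t / t) ^ (q - 1)) - (q - 1) * (F t / t) ^ q) t := by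
  refine ((hasDerivAt_id' t).mul
    ((hF.div (hasDerivAt_id' t) ht).rpow_const (Or.inr hq))).congr_deriv ?_
  have hpow : (F t / t) ^ q = F t / t * (F t / t) ^ (q - 1) := by
    rw [← Real.rpow_one_add' hnonneg (by linarith), add_sub_cancel]
  simp only [Pi.div_apply, hpow]
  field_simp
  ring

section Average

variable {f : ℝ → ℝ} {q a b t : ℝ}

noncomputable def integralAverage (f : ℝ → ℝ) (t : ℝ) : ℝ := (∫ s in (0)..t, f s) / t

lemma intervalIntegrable_of_forall_pos (hint : ∀ t, 0 < t → IntervalIntegrable f volume 0 t)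
    (ha : 0 ≤ a) (hab : a ≤ b) (hb : 0 < b) : IntervalIntegrable f volume a b :=
  (hint b hb).mono_set (by rw [uIcc_of_le hab, uIcc_of_le hb.le]; exact Icc_subset_Icc_left ha)

lemma le_integralAverage (hmono : AntitoneOn f (Ioi 0))
    (hint : ∀ t, 0 < t → IntervalIntegrable f volume 0 t) (ht : 0 < t) :
    f t ≤ integralAverage f t := by
  have h := (hmono.mono Ioc_subset_Ioi_self).sub_mul_le_intervalIntegral ht.le (hint t ht)
  rw [integralAverage, le_div_iff₀ ht]
  linarith

lemma integralAverage_nonneg (hf0 : ∀ t, 0 < t → 0 ≤ f t) (hmono : AntitoneOn f (Ioi 0))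
    (hint : ∀ t, 0 < t → IntervalIntegrable f volume 0 t) (ht : 0 < t) :
    0 ≤ integralAverage f t :=
  (hf0 t ht).trans (le_integralAverage hmono hint ht)

lemma antitoneOn_integralAverage (hmono : AntitoneOn f (Ioi 0))
    (hint : ∀ t, 0 < t → IntervalIntegrable f volume 0 t) :
    AntitoneOn (integralAverage f) (Ioi 0) := by
  intro t (ht : 0 < t) s (hs : 0 < s) hts
  have hts_int := intervalIntegrable_of_forall_pos hint ht.le hts hs
  have hsplit := intervalIntegral.integral_add_adjacent_intervals (hint t ht) hts_int
  have htail : ∫ x in t..s, f x ≤ (s - t) * f t :=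
    (hmono.mono fun x hx => ht.trans_le hx.1).intervalIntegral_le_sub_mul hts hts_int
  have hft := le_integralAverage hmono hint ht
  rw [integralAverage, le_div_iff₀ ht] at hft
  rw [integralAverage, integralAverage, div_le_div_iff₀ hs ht, ← hsplit]
  nlinarith

lemma continuousAt_primitive (hint : ∀ t, 0 < t → IntervalIntegrable f volume 0 t)
    (ht : 0 < t) : ContinuousAt (fun u => ∫ s in (0)..u, f s) t := by
  have h := intervalIntegral.continuousOn_primitive_interval' (hint (2 * t) (by linarith))
    left_mem_uIcc
  rw [uIcc_of_le (by linarith)] at h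
  exact h.continuousAt (Icc_mem_nhds ht (by linarith))

lemma continuousOn_integralAverage (hint : ∀ t, 0 < t → IntervalIntegrable f volume 0 t) :
    ContinuousOn (integralAverage f) (Ioi 0) := fun _ ht =>
  ((continuousAt_primitive hint ht).div continuousAt_id (ne_of_gt ht)).continuousWithinAt

lemma hasDerivAt_primitive (hint : ∀ t, 0 < t → IntervalIntegrable f volume 0 t) (ht : 0 < t)
    (hcont : ContinuousAt f t) : HasDerivAt (fun u => ∫ s in (0)..u, f s) (f t) t :=
  intervalIntegral.integral_hasDerivAt_right (hint t ht)
    ⟨Ioo 0 (2 * t), Ioo_mem_nhds ht (by linarith),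
      (hint (2 * t) (by linarith)).1.aestronglyMeasurable.mono_set Ioo_subset_Ioc_self⟩ hcont

lemma intervalIntegrable_integralAverage_rpow {r : ℝ}
    (hint : ∀ t, 0 < t → IntervalIntegrable f volume 0 t) (hr : 0 ≤ r) (ha : 0 < a)
    (hab : a ≤ b) : IntervalIntegrable (fun t => integralAverage f t ^ r) volume a b :=
  (((continuousOn_integralAverage hint).mono fun _ hx => ha.trans_le hx.1).rpow_const
    fun _ _ => Or.inr hr).intervalIntegrable_of_Icc hab

lemma intervalIntegrable_mul_integralAverage_rpow {r : ℝ}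
    (hint : ∀ t, 0 < t → IntervalIntegrable f volume 0 t) (hr : 0 ≤ r) (ha : 0 < a)
    (hab : a ≤ b) : IntervalIntegrable (fun t => f t * integralAverage f t ^ r) volume a b :=
  (intervalIntegrable_iff_integrableOn_Icc_of_le hab).2 <|
    ((intervalIntegrable_iff_integrableOn_Icc_of_le hab).1
      (intervalIntegrable_of_forall_pos hint ha.le hab (ha.trans_le hab))).mul_continuousOn
      (((continuousOn_integralAverage hint).mono fun _ hx => ha.trans_le hx.1).rpow_const
        fun _ _ => Or.inr hr) isCompact_Icc

lemma integral_mul_integralAverage_rpow (hf0 : ∀ t, 0 < t → 0 ≤ f t)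
    (hmono : AntitoneOn f (Ioi 0)) (hint : ∀ t, 0 < t → IntervalIntegrable f volume 0 t)
    (hq : 1 ≤ q) (ha : 0 < a) (hab : a ≤ b) :
    q * ∫ t in a..b, f t * integralAverage f t ^ (q - 1) =
      b * integralAverage f b ^ q - a * integralAverage f a ^ q
        + (q - 1) * ∫ t in a..b, integralAverage f t ^ q := by
  set A := integralAverage f
  have hAcont : ContinuousOn A (Icc a b) :=
    (continuousOn_integralAverage hint).mono fun _ hx => ha.trans_le hx.1
  have hfA := intervalIntegrable_mul_integralAverage_rpow hint (sub_nonneg.2 hq) ha hab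
  have hAq := intervalIntegrable_integralAverage_rpow hint (zero_le_one.trans hq) ha hab
  have hderiv : ∀ x ∈ Ioo a b \ {x ∈ Ioi 0 | ¬ContinuousWithinAt f (Ioi 0) x},
      HasDerivAt (fun t => t * A t ^ q) (q * (f x * A x ^ (q - 1)) - (q - 1) * A x ^ q) x := by
    rintro x ⟨hx, hxc⟩
    have hx0 : 0 < x := ha.trans hx.1
    have hcont : ContinuousAt f x := by
      simp only [mem_ofPred_eq, mem_Ioi, hx0, true_and, not_not] at hxc
      exact hxc.continuousAt (Ioi_mem_nhds hx0)
    exact hasDerivAt_mul_div_rpow (hasDerivAt_primitive hint hx0 hcont) hx0.ne'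
      (integralAverage_nonneg hf0 hmono hint hx0) hq
  have hFTC := integral_eq_of_hasDerivAt_off_countable_of_le (fun t => t * A t ^ q) _ hab
    hmono.countable_not_continuousWithinAt
    (continuousOn_id.mul (hAcont.rpow_const fun _ _ => Or.inr (zero_le_one.trans hq))) hderiv
    ((hfA.const_mul q).sub (hAq.const_mul (q - 1)))
  rw [intervalIntegral.integral_sub (hfA.const_mul q) (hAq.const_mul _),
    intervalIntegral.integral_const_mul, intervalIntegral.integral_const_mul] at hFTC
  linarith

lemma setLIntegral_Ioc_rpow_le_integralAverage (hf0 : ∀ t, 0 < t → 0 ≤ f t)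
    (hmono : AntitoneOn f (Ioi 0)) (hint : ∀ t, 0 < t → IntervalIntegrable f volume 0 t)
    (hq : 1 ≤ q) (ha : 0 < a) (hab : a ≤ b) :
    ∫⁻ t in Ioc a b, ENNReal.ofReal (f t) ^ q ≤
      ENNReal.ofReal (b * integralAverage f b ^ q) + ENNReal.ofReal ((q - 1) / q) *
        ∫⁻ t in Ioc a b, ENNReal.ofReal (integralAverage f t) ^ q := by
  set A := integralAverage f
  have hq0 : 0 < q := by linarith
  have hfA_int : IntegrableOn (fun t => f t * A t ^ (q - 1)) (Ioc a b) :=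
    (intervalIntegrable_mul_integralAverage_rpow hint (by linarith) ha hab).1
  have hAq_int : IntegrableOn (fun t => A t ^ q) (Ioc a b) :=
    (intervalIntegrable_integralAverage_rpow hint hq0.le ha hab).1
  have hpoint : ∀ t ∈ Ioc a b, ENNReal.ofReal (f t) ^ q ≤ ENNReal.ofReal (f t * A t ^ (q - 1)) := by
    intro t ht
    have ht0 : 0 < t := ha.trans ht.1
    rw [ENNReal.ofReal_rpow_of_nonneg (hf0 t ht0) hq0.le]
    refine ENNReal.ofReal_le_ofReal ?_
    calc f t ^ q = f t * f t ^ (q - 1) := by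
          rw [← Real.rpow_one_add' (hf0 t ht0) (by linarith), add_sub_cancel]
      _ ≤ f t * A t ^ (q - 1) :=
          mul_le_mul_of_nonneg_left (Real.rpow_le_rpow (hf0 t ht0)
            (le_integralAverage hmono hint ht0) (by linarith)) (hf0 t ht0)
  have hreal : ∫ t in Ioc a b, f t * A t ^ (q - 1) ≤
      b * A b ^ q + (q - 1) / q * ∫ t in Ioc a b, A t ^ q := by
    have hid := integral_mul_integralAverage_rpow hf0 hmono hint hq ha hab
    rw [intervalIntegral.integral_of_le hab, intervalIntegral.integral_of_le hab] at hid
    have hAa := mul_nonneg ha.le (Real.rpow_nonneg (integralAverage_nonneg hf0 hmono hint ha) q)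
    have hAb := mul_nonneg (ha.trans_le hab).le
      (Real.rpow_nonneg (integralAverage_nonneg hf0 hmono hint (ha.trans_le hab)) q)
    have hc : q * ((q - 1) / q * ∫ t in Ioc a b, A t ^ q) = (q - 1) * ∫ t in Ioc a b, A t ^ q := by
      field_simp
    rw [← mul_le_mul_iff_of_pos_left hq0, mul_add, hc]
    nlinarith
  have hAq_nonneg : ∀ t ∈ Ioc a b, 0 ≤ A t ^ q := fun t ht =>
    Real.rpow_nonneg (integralAverage_nonneg hf0 hmono hint (ha.trans ht.1)) q
  calc ∫⁻ t in Ioc a b, ENNReal.ofReal (f t) ^ q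
      ≤ ∫⁻ t in Ioc a b, ENNReal.ofReal (f t * A t ^ (q - 1)) :=
        setLIntegral_mono' measurableSet_Ioc hpoint
    _ = ENNReal.ofReal (∫ t in Ioc a b, f t * A t ^ (q - 1)) := by
        refine (ofReal_integral_eq_lintegral_ofReal hfA_int ?_).symm
        filter_upwards [ae_restrict_mem measurableSet_Ioc] with t ht
        exact mul_nonneg (hf0 t (ha.trans ht.1)) (Real.rpow_nonneg
          (integralAverage_nonneg hf0 hmono hint (ha.trans ht.1)) _)
    _ ≤ ENNReal.ofReal (b * A b ^ q) +
          ENNReal.ofReal ((q - 1) / q) * ENNReal.ofReal (∫ t in Ioc a b, A t ^ q) := by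
        rw [← ENNReal.ofReal_mul (div_nonneg (by linarith) hq0.le)]
        exact (ENNReal.ofReal_le_ofReal hreal).trans ENNReal.ofReal_add_le
    _ = _ := by
        rw [ofReal_integral_eq_lintegral_ofReal hAq_int
          ((ae_restrict_iff' measurableSet_Ioc).2 (ae_of_all _ hAq_nonneg))]
        congr 2
        refine setLIntegral_congr_fun measurableSet_Ioc fun t ht => ?_
        exact (ENNReal.ofReal_rpow_of_nonneg
          (integralAverage_nonneg hf0 hmono hint (ha.trans ht.1)) hq0.le).symm

lemma ofReal_mul_integralAverage_rpow_le (hf0 : ∀ t, 0 < t → 0 ≤ f t)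
    (hmono : AntitoneOn f (Ioi 0)) (hint : ∀ t, 0 < t → IntervalIntegrable f volume 0 t)
    (hq : 0 ≤ q) (hb : 0 < b) :
    ENNReal.ofReal (b * integralAverage f b ^ q) ≤
      2 * ∫⁻ t in Ioc (b / 2) b, ENNReal.ofReal (integralAverage f t) ^ q := by
  calc ENNReal.ofReal (b * integralAverage f b ^ q)
      = 2 * ∫⁻ _ in Ioc (b / 2) b, ENNReal.ofReal (integralAverage f b) ^ q := by
        rw [setLIntegral_const, Real.volume_Ioc, ENNReal.ofReal_rpow_of_nonneg
          (integralAverage_nonneg hf0 hmono hint hb) hq, ← ENNReal.ofReal_mul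
          (Real.rpow_nonneg (integralAverage_nonneg hf0 hmono hint hb) q),
          ← ENNReal.ofReal_ofNat 2, ← ENNReal.ofReal_mul zero_le_two]
        congr 1
        ring
    _ ≤ 2 * ∫⁻ t in Ioc (b / 2) b, ENNReal.ofReal (integralAverage f t) ^ q := by
        refine mul_le_mul_right (setLIntegral_mono' measurableSet_Ioc fun t ht => ?_) 2
        refine ENNReal.rpow_le_rpow ?_ hq
        exact ENNReal.ofReal_le_ofReal <| antitoneOn_integralAverage hmono hint
          (half_pos hb |>.trans ht.1) hb ht.2

lemma setLIntegral_Ioi_rpow_le_integralAverage (hf0 : ∀ t, 0 < t → 0 ≤ f t)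
    (hmono : AntitoneOn f (Ioi 0)) (hint : ∀ t, 0 < t → IntervalIntegrable f volume 0 t)
    (hq : 1 < q) :
    ∫⁻ t in Ioi 0, ENNReal.ofReal (f t) ^ q ≤
      ENNReal.ofReal ((q - 1) / q) * ∫⁻ t in Ioi 0, ENNReal.ofReal (integralAverage f t) ^ q := by
  set c := ENNReal.ofReal ((q - 1) / q)
  set B := ∫⁻ t in Ioi 0, ENNReal.ofReal (integralAverage f t) ^ q
  by_cases hB : B = ∞
  · rw [hB, ENNReal.mul_top (by simpa [c] using div_pos (by linarith) (by linarith))]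
    exact le_top
  have htail := tendsto_setLIntegral_Ioi_atTop hB
  refine setLIntegral_Ioi_le_of_forall_Ioc fun a b ha => ?_
  have hbound : ∀ b' ≥ max a b, ∫⁻ t in Ioc a b, ENNReal.ofReal (f t) ^ q ≤
      2 * (∫⁻ t in Ioi (b' / 2), ENNReal.ofReal (integralAverage f t) ^ q) + c * B := by
    intro b' hb'
    have hab' : a ≤ b' := le_of_max_le_left hb'
    have hb'0 : 0 < b' := ha.trans_le hab'
    calc ∫⁻ t in Ioc a b, ENNReal.ofReal (f t) ^ q
        ≤ ∫⁻ t in Ioc a b', ENNReal.ofReal (f t) ^ q :=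
          lintegral_mono_set (Ioc_subset_Ioc_right (le_of_max_le_right hb'))
      _ ≤ _ := setLIntegral_Ioc_rpow_le_integralAverage hf0 hmono hint hq.le ha hab'
      _ ≤ _ := by
          gcongr
          · exact (ofReal_mul_integralAverage_rpow_le hf0 hmono hint (by linarith) hb'0).trans
              (by gcongr; exact Ioc_subset_Ioi_self)
          · exact lintegral_mono_set fun t ht => ha.trans ht.1
  have hlim : Tendsto (fun b' => 2 * (∫⁻ t in Ioi (b' / 2),
      ENNReal.ofReal (integralAverage f t) ^ q) + c * B) atTop (𝓝 (c * B)) := by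
    simpa using ((ENNReal.Tendsto.const_mul (htail.comp (tendsto_id.atTop_div_const two_pos))
      (Or.inr ENNReal.ofNat_ne_top)).add_const (c * B))
  exact ge_of_tendsto hlim (eventually_atTop.2 ⟨max a b, hbound⟩)

end Average

/-- Sharp reverse Hardy inequality for nonincreasing functions:
`(∫_0^∞ f^q)^{1/q} ≤ ((q-1)/q)^{1/q} (∫_0^∞ (f^{**})^q)^{1/q}`, where
`f^{**}(t) = (1/t)∫_0^t f`. Both sides may be infinite. -/
theorem stmt5 (f : ℝ → ℝ) (q : ℝ) (hq : 1 < q)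
    (hf0 : ∀ t, 0 < t → 0 ≤ f t) (hmono : AntitoneOn f (Ioi 0))
    (hloc : ∀ t, 0 < t → IntegrableOn f (Ioc 0 t)) :
    (∫⁻ t in Ioi (0:ℝ), ENNReal.ofReal (f t) ^ q) ^ (1/q)
      ≤ ENNReal.ofReal (((q - 1)/q) ^ (1/q)) *
        (∫⁻ t in Ioi (0:ℝ),
          ENNReal.ofReal ((1/t) * ∫ s in Ioc (0:ℝ) t, f s) ^ q) ^ (1/q) := by
  have hint : ∀ t, 0 < t → IntervalIntegrable f volume 0 t := fun t ht =>
    (intervalIntegrable_iff_integrableOn_Ioc_of_le ht.le).2 (hloc t ht)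
  have havg : ∫⁻ t in Ioi (0:ℝ), ENNReal.ofReal ((1/t) * ∫ s in Ioc (0:ℝ) t, f s) ^ q =
      ∫⁻ t in Ioi 0, ENNReal.ofReal (integralAverage f t) ^ q :=
    setLIntegral_congr_fun measurableSet_Ioi fun t ht => by
      rw [integralAverage, intervalIntegral.integral_of_le (le_of_lt ht), one_div_mul_eq_div]
  have hq' : (0:ℝ) ≤ 1 / q := by positivity
  rw [havg, ← ENNReal.ofReal_rpow_of_nonneg (div_nonneg (by linarith) (by linarith)) hq',
    ← ENNReal.mul_rpow_of_nonneg _ _ hq']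
  exact ENNReal.rpow_le_rpow (setLIntegral_Ioi_rpow_le_integralAverage hf0 hmono hint hq) hq'
end

section
/- Let $f : (0,\infty) \to [0,\infty)$ be nonincreasing and locally integrable, with $f^{**}(t) = \frac{1}{t}\int_0^t f(s)\,ds$. For $1 \leq q < \infty$, if $f^{**}(t) \to 0$ as $t \to \infty$, then $\left(\int_0^\infty f^{**}(t)^q\,dt\right)^{1/q} \leq q \left(\int_0^\infty [f^{**}(t) - f(t)]^q\,dt\right)^{1/q}$. -/
/-!
Write `hardyAverage f` for `f**`. For `0 < t ≤ T` the fundamental theorem of calculus, valid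
off the countably many discontinuities of the monotone `f`, gives
`f**(t) - f**(T) = ∫_t^T (f**(s) - f(s)) ds/s`,
whose integrand is nonnegative because `f ≤ f**`; letting `T → ∞` yields
`f**(t) ≤ ∫_t^∞ (f** - f)(s) ds/s`. The theorem then follows from the dual Hardy inequality
`‖∫_t^∞ g(s) ds/s‖_q ≤ q ‖g‖_q`. To prove it, substitute `s = t u`, so that
`∫_t^∞ g(s) ds/s = ∫ g(t u) u^(1/q) dν(u)` for the measure `ν = hardyMeasure q` with density
`u^(-1/q-1)` on `(1, ∞)`, of total mass `q`; apply Jensen's inequality for `ν` and integrate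
in `t` by Tonelli, using `∫_0^∞ g(t u)^q dt = u⁻¹ ∫_0^∞ g^q`.
-/

open Set MeasureTheory Filter
open scoped ENNReal Topology

theorem lintegral_comp_mul_left_Ioi' (g : ℝ → ℝ≥0∞) (a : ℝ) {b : ℝ} (hb : 0 < b) :
    ENNReal.ofReal b * ∫⁻ x in Ioi a, g (b * x) = ∫⁻ x in Ioi (b * a), g x := by
  rw [← image_mul_left_Ioi hb, lintegral_image_eq_lintegral_abs_deriv_mul measurableSet_Ioi
    (fun x _ => ((hasDerivAt_id' x).const_mul b).hasDerivWithinAt)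
    (mul_right_injective₀ hb.ne').injOn, lintegral_const_mul' _ _ ENNReal.ofReal_ne_top]
  simp [abs_of_pos hb]

theorem rpow_lintegral_le_measure_univ_rpow_mul_lintegral_rpow {α : Type*} [MeasurableSpace α]
    (μ : Measure α) {q : ℝ} (hq : 1 ≤ q) {h : α → ℝ≥0∞} (hh : AEMeasurable h μ) :
    (∫⁻ a, h a ∂μ) ^ q ≤ μ univ ^ (q - 1) * ∫⁻ a, h a ^ q ∂μ := by
  have hq0 : 0 < q := zero_lt_one.trans_le hq
  have := eLpNorm'_le_eLpNorm'_mul_rpow_measure_univ zero_lt_one hq hh.aestronglyMeasurable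
  simp only [eLpNorm', enorm_eq_self, ENNReal.rpow_one, div_one] at this
  calc (∫⁻ a, h a ∂μ) ^ q
      ≤ ((∫⁻ a, h a ^ q ∂μ) ^ (1 / q) * μ univ ^ (1 - 1 / q)) ^ q :=
        ENNReal.rpow_le_rpow this hq0.le
    _ = μ univ ^ (q - 1) * ∫⁻ a, h a ^ q ∂μ := by
        rw [ENNReal.mul_rpow_of_nonneg _ _ hq0.le, ← ENNReal.rpow_mul, ← ENNReal.rpow_mul,
          one_div_mul_cancel hq0.ne', ENNReal.rpow_one, mul_comm, sub_mul, one_mul,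
          one_div_mul_cancel hq0.ne']

noncomputable def hardyMeasure (q : ℝ) : Measure ℝ :=
  (volume.restrict (Ioi 1)).withDensity fun u => ENNReal.ofReal (u ^ (-q⁻¹ - 1))

instance (q : ℝ) : SFinite (hardyMeasure q) := by
  unfold hardyMeasure
  infer_instance

theorem hardyMeasure_univ {q : ℝ} (hq : 0 < q) : hardyMeasure q univ = ENNReal.ofReal q := by
  have hlt : -q⁻¹ - 1 < -1 := by have := inv_pos.2 hq; linarith
  rw [hardyMeasure, withDensity_apply _ MeasurableSet.univ, Measure.restrict_univ,
    ← ofReal_integral_eq_lintegral_ofReal (integrableOn_Ioi_rpow_of_lt hlt one_pos)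
      (ae_restrict_of_forall_mem measurableSet_Ioi fun u (hu : 1 < u) =>
        Real.rpow_nonneg (zero_le_one.trans hu.le) _),
    integral_Ioi_rpow_of_lt hlt one_pos]
  congr 1
  field_simp
  simp

theorem lintegral_Ioi_div_eq_lintegral_hardyMeasure (q : ℝ) {G : ℝ → ℝ≥0∞}
    (hG : Measurable G) {t : ℝ} (ht : 0 < t) :
    ∫⁻ s in Ioi t, G s / ENNReal.ofReal s
      = ∫⁻ u, G (t * u) * ENNReal.ofReal u ^ q⁻¹ ∂hardyMeasure q := by
  rw [hardyMeasure, lintegral_withDensity_eq_lintegral_mul _ (by fun_prop) (by fun_prop),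
    ← mul_one t, ← lintegral_comp_mul_left_Ioi' _ _ ht,
    ← lintegral_const_mul' _ _ ENNReal.ofReal_ne_top, mul_one]
  refine setLIntegral_congr_fun measurableSet_Ioi fun u (hu : 1 < u) => ?_
  have hu0 : 0 < u := zero_lt_one.trans hu
  have hexp : -q⁻¹ - 1 + q⁻¹ = -1 := by ring
  simp only [Pi.mul_apply]
  rw [ENNReal.ofReal_rpow_of_pos hu0, mul_left_comm,
    ← ENNReal.ofReal_mul (Real.rpow_nonneg hu0.le _), ← Real.rpow_add hu0, hexp,
    Real.rpow_neg_one, ENNReal.ofReal_inv_of_pos hu0, ← div_eq_mul_inv,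
    ENNReal.ofReal_mul ht.le, ← mul_div_assoc,
    ENNReal.mul_div_mul_left _ _ (ENNReal.ofReal_pos.2 ht).ne' ENNReal.ofReal_ne_top]

theorem lintegral_rpow_lintegral_Ioi_div_le_of_measurable {q : ℝ} (hq : 1 ≤ q)
    {G : ℝ → ℝ≥0∞} (hG : Measurable G) :
    ∫⁻ t in Ioi 0, (∫⁻ s in Ioi t, G s / ENNReal.ofReal s) ^ q
      ≤ ENNReal.ofReal q ^ q * ∫⁻ s in Ioi 0, G s ^ q := by
  have hq0 : 0 < q := zero_lt_one.trans_le hq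
  set ν := hardyMeasure q
  have hjensen : ∀ t, 0 < t → (∫⁻ s in Ioi t, G s / ENNReal.ofReal s) ^ q
      ≤ ENNReal.ofReal q ^ (q - 1) * ∫⁻ u, G (t * u) ^ q * ENNReal.ofReal u ∂ν := by
    intro t ht
    rw [lintegral_Ioi_div_eq_lintegral_hardyMeasure q hG ht, ← hardyMeasure_univ hq0]
    refine (rpow_lintegral_le_measure_univ_rpow_mul_lintegral_rpow ν hq
      (by fun_prop)).trans_eq ?_
    congr 2 with u
    rw [ENNReal.mul_rpow_of_nonneg _ _ hq0.le, ← ENNReal.rpow_mul, inv_mul_cancel₀ hq0.ne',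
      ENNReal.rpow_one]
  have hdilate : ∀ᵐ u ∂ν, ∫⁻ t in Ioi 0, G (t * u) ^ q * ENNReal.ofReal u
      = ∫⁻ s in Ioi 0, G s ^ q := by
    have hpos : ∀ᵐ u ∂ν, 0 < u := (withDensity_absolutelyContinuous _ _).ae_le
      (ae_restrict_of_forall_mem measurableSet_Ioi fun u (hu : 1 < u) => zero_lt_one.trans hu)
    filter_upwards [hpos] with u hu
    rw [lintegral_mul_const' _ _ ENNReal.ofReal_ne_top, mul_comm]
    simpa [mul_comm] using lintegral_comp_mul_left_Ioi' (fun s => G s ^ q) 0 hu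
  have hpow : ENNReal.ofReal q ^ (q - 1) * ENNReal.ofReal q = ENNReal.ofReal q ^ q := by
    nth_rewrite 2 [← ENNReal.rpow_one (ENNReal.ofReal q)]
    rw [← ENNReal.rpow_add_of_nonneg _ _ (by linarith) zero_le_one, sub_add_cancel]
  calc ∫⁻ t in Ioi 0, (∫⁻ s in Ioi t, G s / ENNReal.ofReal s) ^ q
      ≤ ∫⁻ t in Ioi 0, ENNReal.ofReal q ^ (q - 1) *
          ∫⁻ u, G (t * u) ^ q * ENNReal.ofReal u ∂ν :=
        setLIntegral_mono' measurableSet_Ioi hjensen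
    _ = ENNReal.ofReal q ^ (q - 1) *
          ∫⁻ u, (∫⁻ t in Ioi 0, G (t * u) ^ q * ENNReal.ofReal u) ∂ν := by
        rw [lintegral_const_mul' _ _ (ENNReal.rpow_ne_top_of_nonneg (by linarith)
          ENNReal.ofReal_ne_top), lintegral_lintegral_swap (by fun_prop)]
    _ = ENNReal.ofReal q ^ q * ∫⁻ s in Ioi 0, G s ^ q := by
        rw [lintegral_congr_ae hdilate, lintegral_const, hardyMeasure_univ hq0,
          mul_comm _ (ENNReal.ofReal q), ← mul_assoc, hpow]

theorem lintegral_rpow_lintegral_Ioi_div_le {q : ℝ} (hq : 1 ≤ q)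
    {G : ℝ → ℝ≥0∞} (hG : AEMeasurable G (volume.restrict (Ioi 0))) :
    ∫⁻ t in Ioi 0, (∫⁻ s in Ioi t, G s / ENNReal.ofReal s) ^ q
      ≤ ENNReal.ofReal q ^ q * ∫⁻ s in Ioi 0, G s ^ q := by
  have hG' : ∀ t, 0 ≤ t → G =ᵐ[volume.restrict (Ioi t)] hG.mk G := fun t ht =>
    ae_restrict_of_ae_restrict_of_subset (Ioi_subset_Ioi ht) hG.ae_eq_mk
  calc ∫⁻ t in Ioi 0, (∫⁻ s in Ioi t, G s / ENNReal.ofReal s) ^ q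
      = ∫⁻ t in Ioi 0, (∫⁻ s in Ioi t, hG.mk G s / ENNReal.ofReal s) ^ q := by
        refine setLIntegral_congr_fun measurableSet_Ioi fun t (ht : 0 < t) => ?_
        congr 1
        exact lintegral_congr_ae <| (hG' t ht.le).mono fun s hs => by simp only [hs]
    _ ≤ ENNReal.ofReal q ^ q * ∫⁻ s in Ioi 0, hG.mk G s ^ q :=
        lintegral_rpow_lintegral_Ioi_div_le_of_measurable hq hG.measurable_mk
    _ = ENNReal.ofReal q ^ q * ∫⁻ s in Ioi 0, G s ^ q := by
        congr 1
        exact lintegral_congr_ae <| (hG' 0 le_rfl).mono fun s hs => by simp only [hs]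

noncomputable def hardyAverage (f : ℝ → ℝ) (t : ℝ) : ℝ := (1 / t) * ∫ s in Ioc 0 t, f s

section HardyAverage

variable {f : ℝ → ℝ}

theorem AntitoneOn.le_hardyAverage (hmono : AntitoneOn f (Ioi 0))
    (hloc : ∀ t, 0 < t → IntegrableOn f (Ioc 0 t)) {s : ℝ} (hs : 0 < s) :
    f s ≤ hardyAverage f s := by
  have h := setIntegral_mono_on (integrableOn_const measure_Ioc_lt_top.ne) (hloc s hs)
    measurableSet_Ioc fun u hu => hmono hu.1 hs hu.2
  rw [setIntegral_const, Real.volume_real_Ioc_of_le hs.le, sub_zero, smul_eq_mul] at h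
  rw [hardyAverage, one_div, inv_mul_eq_div, le_div_iff₀ hs, mul_comm]
  exact h

theorem continuousOn_hardyAverage (hloc : ∀ t, 0 < t → IntegrableOn f (Ioc 0 t)) :
    ContinuousOn (hardyAverage f) (Ioi 0) := by
  intro x (hx : 0 < x)
  have hF : ContinuousWithinAt (fun t => ∫ s in Ioc 0 t, f s) (Icc 0 (x + 1)) x :=
    intervalIntegral.continuousOn_primitive
      ((integrableOn_Icc_iff_integrableOn_Ioc).2 (hloc (x + 1) (by linarith))) x
      ⟨hx.le, by linarith⟩
  have hnhds : Icc 0 (x + 1) ∈ 𝓝[Ioi 0] x :=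
    mem_nhdsWithin_of_mem_nhds (Icc_mem_nhds hx (lt_add_one x))
  exact ((continuousAt_const.div continuousAt_id hx.ne').continuousWithinAt.mul
    (hF.mono_of_mem_nhdsWithin hnhds))

theorem hasDerivAt_hardyAverage (hloc : ∀ t, 0 < t → IntegrableOn f (Ioc 0 t)) {s : ℝ}
    (hs : 0 < s) (hf : ContinuousAt f s) :
    HasDerivAt (hardyAverage f) (-((hardyAverage f s - f s) / s)) s := by
  have hmeas : StronglyMeasurableAtFilter f (𝓝 s) :=
    ⟨Ioo 0 (2 * s), Ioo_mem_nhds hs (by linarith),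
      (hloc (2 * s) (by linarith)).aestronglyMeasurable.mono_set Ioo_subset_Ioc_self⟩
  have hF : HasDerivAt (fun t => ∫ u in Ioc 0 t, f u) (f s) s := by
    refine (intervalIntegral.integral_hasDerivAt_right
      ((intervalIntegrable_iff_integrableOn_Ioc_of_le hs.le).2 (hloc s hs)) hmeas hf
      ).congr_of_eventuallyEq ?_
    filter_upwards [lt_mem_nhds hs] with t ht
    exact (intervalIntegral.integral_of_le ht.le).symm
  have hA : hardyAverage f = fun t => t⁻¹ * ∫ u in Ioc 0 t, f u := by
    funext t
    rw [hardyAverage, one_div]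
  rw [hA]
  refine ((hasDerivAt_inv hs.ne').mul hF).congr_deriv ?_
  field_simp
  ring

theorem intervalIntegrable_hardyAverage_sub_div (hloc : ∀ t, 0 < t → IntegrableOn f (Ioc 0 t))
    {t T : ℝ} (ht : 0 < t) (htT : t ≤ T) :
    IntervalIntegrable (fun s => (hardyAverage f s - f s) / s) volume t T := by
  have hIcc : Icc t T ⊆ Ioi 0 := fun x hx => ht.trans_le hx.1
  have hA : IntervalIntegrable (hardyAverage f) volume t T :=
    ((continuousOn_hardyAverage hloc).mono (uIcc_of_le htT ▸ hIcc)).intervalIntegrable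
  have hf : IntervalIntegrable f volume t T :=
    (intervalIntegrable_iff_integrableOn_Ioc_of_le htT).2
      ((hloc T (ht.trans_le htT)).mono_set (Ioc_subset_Ioc_left ht.le))
  simpa only [div_eq_mul_inv] using (hA.sub hf).mul_continuousOn
    (continuousOn_inv₀.mono fun x hx => (hIcc (uIcc_of_le htT ▸ hx)).ne')

theorem hardyAverage_sub_hardyAverage (hmono : AntitoneOn f (Ioi 0))
    (hloc : ∀ t, 0 < t → IntegrableOn f (Ioc 0 t)) {t T : ℝ} (ht : 0 < t) (htT : t ≤ T) :
    hardyAverage f t - hardyAverage f T = ∫ s in t..T, (hardyAverage f s - f s) / s := by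
  have hFTC := integral_eq_of_hasDerivAt_off_countable_of_le (hardyAverage f)
    (fun s => -((hardyAverage f s - f s) / s)) htT hmono.countable_not_continuousWithinAt
    ((continuousOn_hardyAverage hloc).mono fun x hx => ht.trans_le hx.1)
    (fun x hx => by
      have hx0 : 0 < x := ht.trans hx.1.1
      have hcont : ContinuousWithinAt f (Ioi 0) x := by
        by_contra h
        exact hx.2 ⟨hx0, h⟩
      exact hasDerivAt_hardyAverage hloc hx0 (hcont.continuousAt (Ioi_mem_nhds hx0)))
    (intervalIntegrable_hardyAverage_sub_div hloc ht htT).neg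
  rw [intervalIntegral.integral_neg] at hFTC
  linarith

theorem ofReal_hardyAverage_le_lintegral (hmono : AntitoneOn f (Ioi 0))
    (hloc : ∀ t, 0 < t → IntegrableOn f (Ioc 0 t))
    (hlim : Tendsto (hardyAverage f) atTop (𝓝 0)) {t : ℝ} (ht : 0 < t) :
    ENNReal.ofReal (hardyAverage f t)
      ≤ ∫⁻ s in Ioi t, ENNReal.ofReal (hardyAverage f s - f s) / ENNReal.ofReal s := by
  set K := ∫⁻ s in Ioi t, ENNReal.ofReal (hardyAverage f s - f s) / ENNReal.ofReal s
  have hbound : ∀ T, t ≤ T →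
      ENNReal.ofReal (hardyAverage f t) ≤ K + ENNReal.ofReal (hardyAverage f T) := by
    intro T htT
    have hK : ENNReal.ofReal (hardyAverage f t - hardyAverage f T) ≤ K := by
      rw [hardyAverage_sub_hardyAverage hmono hloc ht htT, intervalIntegral.integral_of_le htT,
        ofReal_integral_eq_lintegral_ofReal
          ((intervalIntegrable_iff_integrableOn_Ioc_of_le htT).1
            (intervalIntegrable_hardyAverage_sub_div hloc ht htT))
          (ae_restrict_of_forall_mem measurableSet_Ioc fun s hs => div_nonneg
            (sub_nonneg.2 (hmono.le_hardyAverage hloc (ht.trans hs.1))) (ht.trans hs.1).le)]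
      refine (lintegral_mono_set Ioc_subset_Ioi_self).trans_eq
        (setLIntegral_congr_fun measurableSet_Ioi fun s (hs : t < s) => ?_)
      exact ENNReal.ofReal_div_of_pos (ht.trans hs)
    calc ENNReal.ofReal (hardyAverage f t)
        = ENNReal.ofReal (hardyAverage f t - hardyAverage f T + hardyAverage f T) := by
          rw [sub_add_cancel]
      _ ≤ _ := ENNReal.ofReal_add_le
      _ ≤ K + ENNReal.ofReal (hardyAverage f T) := by gcongr
  have hK : Tendsto (fun T => K + ENNReal.ofReal (hardyAverage f T)) atTop (𝓝 K) := by
    simpa using tendsto_const_nhds.add (ENNReal.tendsto_ofReal hlim)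
  exact ge_of_tendsto hK ((eventually_ge_atTop t).mono hbound)

end HardyAverage

theorem rpow_one_div_le_mul_rpow_one_div {a b c : ℝ≥0∞} {q : ℝ} (hq : 0 < q)
    (h : a ≤ c ^ q * b) : a ^ (1 / q) ≤ c * b ^ (1 / q) := by
  refine (ENNReal.rpow_le_rpow h (by positivity)).trans_eq ?_
  rw [ENNReal.mul_rpow_of_nonneg _ _ (by positivity), ← ENNReal.rpow_mul,
    mul_one_div_cancel hq.ne', ENNReal.rpow_one]

theorem stmt8_general (f : ℝ → ℝ) (q : ℝ) (hq : 1 ≤ q)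
    (hmono : AntitoneOn f (Ioi 0))
    (hloc : ∀ t, 0 < t → IntegrableOn f (Ioc 0 t))
    (hlim : Tendsto (fun t => (1/t) * ∫ s in Ioc (0:ℝ) t, f s) atTop (nhds 0)) :
    (∫⁻ t in Ioi (0:ℝ),
        ENNReal.ofReal ((1/t) * ∫ s in Ioc (0:ℝ) t, f s) ^ q) ^ (1/q)
      ≤ ENNReal.ofReal q *
        (∫⁻ t in Ioi (0:ℝ),
          ENNReal.ofReal ((1/t) * (∫ s in Ioc (0:ℝ) t, f s) - f t) ^ q) ^ (1/q) := by
  have hq0 : 0 < q := zero_lt_one.trans_le hq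
  have hG : AEMeasurable (fun s => ENNReal.ofReal (hardyAverage f s - f s))
      (volume.restrict (Ioi 0)) :=
    (((continuousOn_hardyAverage hloc).aemeasurable measurableSet_Ioi).sub
      (aemeasurable_restrict_of_antitoneOn measurableSet_Ioi hmono)).ennreal_ofReal
  refine rpow_one_div_le_mul_rpow_one_div hq0 <|
    (setLIntegral_mono' measurableSet_Ioi fun t ht => ?_).trans
      (lintegral_rpow_lintegral_Ioi_div_le hq hG)
  exact ENNReal.rpow_le_rpow (ofReal_hardyAverage_le_lintegral hmono hloc hlim ht) hq0.le

/-- If `f ≥ 0` is nonincreasing, locally integrable and `f^{**}(t) → 0` as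
`t → ∞`, then `(∫_0^∞ (f^{**})^q)^{1/q} ≤ q (∫_0^∞ (f^{**}-f)^q)^{1/q}`. -/
theorem stmt8 (f : ℝ → ℝ) (q : ℝ) (hq : 1 ≤ q)
    (hf0 : ∀ t, 0 < t → 0 ≤ f t) (hmono : AntitoneOn f (Ioi 0))
    (hloc : ∀ t, 0 < t → IntegrableOn f (Ioc 0 t))
    (hlim : Tendsto (fun t => (1/t) * ∫ s in Ioc (0:ℝ) t, f s) atTop (nhds 0)) :
    (∫⁻ t in Ioi (0:ℝ),
        ENNReal.ofReal ((1/t) * ∫ s in Ioc (0:ℝ) t, f s) ^ q) ^ (1/q)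
      ≤ ENNReal.ofReal q *
        (∫⁻ t in Ioi (0:ℝ),
          ENNReal.ofReal ((1/t) * (∫ s in Ioc (0:ℝ) t, f s) - f t) ^ q) ^ (1/q) :=
  stmt8_general f q hq hmono hloc hlim
end

section
/- Let $\mu$ be a measure, and let $F, G$ be nonnegative measurable functions such that for some fixed $B > 0$ and for all $\lambda > 0$, the strong good-lambda inequality $\mu\{F > B G + \lambda\} \leq \frac{1}{4}\mu\{F > \lambda\}$ holds. Then for all $t > 0$, $F^*(t) \leq B\,G^*(t/2) + F^*(2t)$, where $h^*(t) = \inf\{s \geq 0 : \mu\{h > s\} \leq t\}$ denotes the nonincreasing rearrangement. -/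
open Set MeasureTheory

/-- The nonincreasing rearrangement `h^*(t) = inf{s ≥ 0 : μ{h > s} ≤ t}`. -/
noncomputable def rearr {α : Type*} [MeasurableSpace α] (μ : Measure α)
    (h : α → ℝ) (t : ℝ) : ℝ :=
  sInf {s : ℝ | 0 ≤ s ∧ μ {x | s < h x} ≤ ENNReal.ofReal t}

/-- From the strong good-lambda inequality
`μ{F > BG + λ} ≤ ¼ μ{F > λ}` (all `λ > 0`) one deduces
`F^*(t) ≤ B G^*(t/2) + F^*(2t)` for all `t > 0`. -/
theorem stmt9 {α : Type*} [MeasurableSpace α] (μ : Measure α) (F G : α → ℝ)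
    (hF : ∀ x, 0 ≤ F x) (hG : ∀ x, 0 ≤ G x) (B : ℝ) (hB : 0 < B)
    (hnonF : ∀ t, 0 < t →
      {s : ℝ | 0 ≤ s ∧ μ {x | s < F x} ≤ ENNReal.ofReal t}.Nonempty)
    (hnonG : ∀ t, 0 < t →
      {s : ℝ | 0 ≤ s ∧ μ {x | s < G x} ≤ ENNReal.ofReal t}.Nonempty)
    (hgl : ∀ l : ℝ, 0 < l →
      μ {x | B * G x + l < F x} ≤ (1/4) * μ {x | l < F x})
    (t : ℝ) (ht : 0 < t) :
    rearr μ F t ≤ B * rearr μ G (t/2) + rearr μ F (2*t) := by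
  set g := rearr μ G (t/2) with hgdef
  set f := rearr μ F (2*t) with hfdef
  have keyF : ∀ s : ℝ, f < s → μ {x | s < F x} ≤ ENNReal.ofReal (2*t) := by
    intro s hs
    obtain ⟨s₀, hs₀, hlt⟩ := exists_lt_of_csInf_lt (hnonF (2*t) (by linarith)) hs
    exact le_trans (measure_mono (fun x hx => lt_of_le_of_lt hlt.le hx)) hs₀.2
  have keyG : ∀ s : ℝ, g < s → μ {x | s < G x} ≤ ENNReal.ofReal (t/2) := by
    intro s hs
    obtain ⟨s₀, hs₀, hlt⟩ := exists_lt_of_csInf_lt (hnonG (t/2) (by linarith)) hs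
    exact le_trans (measure_mono (fun x hx => lt_of_le_of_lt hlt.le hx)) hs₀.2
  have hg0 : 0 ≤ g := le_csInf (hnonG (t/2) (by linarith)) (fun s hs => hs.1)
  have hf0 : 0 ≤ f := le_csInf (hnonF (2*t) (by linarith)) (fun s hs => hs.1)
  have main : ∀ ε : ℝ, 0 < ε → rearr μ F t ≤ B * g + f + (B + 1) * ε := by
    intro ε hε
    have hmem : B * (g + ε) + (f + ε) ∈
        {s : ℝ | 0 ≤ s ∧ μ {x | s < F x} ≤ ENNReal.ofReal t} := by
      constructor
      · nlinarith
      · have hsub : {x | B * (g + ε) + (f + ε) < F x} ⊆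
            {x | g + ε < G x} ∪ {x | B * G x + (f + ε) < F x} := by
          intro x hx
          by_cases hxG : g + ε < G x
          · exact Or.inl hxG
          · right
            push_neg at hxG
            simp only [mem_setOf_eq] at hx ⊢
            nlinarith
        calc μ {x | B * (g + ε) + (f + ε) < F x}
            ≤ μ {x | g + ε < G x} + μ {x | B * G x + (f + ε) < F x} :=
              le_trans (measure_mono hsub) (measure_union_le _ _)
          _ ≤ ENNReal.ofReal (t/2) + (1/4) * μ {x | (f + ε) < F x} :=
              add_le_add (keyG _ (by linarith)) (hgl (f + ε) (by linarith))
          _ ≤ ENNReal.ofReal (t/2) + (1/4) * ENNReal.ofReal (2*t) := by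
              gcongr
              exact keyF _ (by linarith)
          _ = ENNReal.ofReal t := by
              rw [show (1/4 : ENNReal) = ENNReal.ofReal (1/4) by
                    rw [ENNReal.ofReal_div_of_pos (by norm_num)]; norm_num,
                ← ENNReal.ofReal_mul (by norm_num),
                ← ENNReal.ofReal_add (by linarith) (by nlinarith)]
              ring_nf
    have hle := csInf_le ⟨0, fun s hs => hs.1⟩ hmem
    calc rearr μ F t ≤ B * (g + ε) + (f + ε) := hle
      _ = B * g + f + (B + 1) * ε := by ring
  refine le_of_forall_pos_le_add fun ε hε => ?_
  have h1 := main (ε / (B + 1)) (by positivity)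
  have h2 : (B + 1) * (ε / (B + 1)) = ε := by field_simp
  linarith [h1, h2.ge]
end

section
/- Let $K : (0,\infty) \to [0,\infty)$ be a nondecreasing, concave, differentiable function with $A := \lim_{t\to\infty}K(t) < \infty$ and $M := \sup_{t>0}(\frac{K(t)}{t} - K'(t)) < \infty$. Then for $\theta \in [0,1)$ and $1 \leq q < \infty$ there is an absolute constant $c$ (independent of $\theta$, $q$, $K$) such that $\left(\int_0^\infty (t^{1-\theta}K'(t))^q\frac{dt}{t}\right)^{1/q} \leq c\, q\, (1 + [(1-\theta)q]^{1/q})^{1-\theta}\,[(1-\theta)q]^{-\theta - 1/q}\, A^{1-\theta} M^{\theta} \cdot [(1-\theta)q]^{1/q - 1/q}$; in particular when $(1-\theta)q = 1$ one has $\left(\int_0^\infty (t^{1-\theta}K'(t))^q \frac{dt}{t}\right)^{1/q} \leq c\, q\, A^{1-\theta} M^{\theta}$. -/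
/-!
Concavity and `K ≥ 0` give `0 ≤ t K'(t) ≤ K(t) ≤ A`, and `K(t)/t - K'(t) ≤ M` says that
`K(u)/u + M log u` is nondecreasing, so `K'(t) ≤ M (1 + log (r/t))` for `t ≤ r := A/M`.
Write `α = (1-θ)q`, so that the integrand is `t^(α-1) K'(t)^q`. On `(0, r]` the logarithm is
absorbed into `(r/t)^(α/2q)` and a power of `t` is integrated; on `(r, ∞)` the bound `K' ≤ A/t`
is used on `q - 1` of the factors and `∫_r^∞ K' ≤ A` on the last one. Both pieces are
`≲ A^α M^(q-α)`, whose `q`-th root is `A^(1-θ) M^θ`.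
-/

open Set MeasureTheory Filter Topology

namespace JohnNirenberg

lemma rpow_inv_le_two {y : ℝ} (hy : 1 ≤ y) : y ^ y⁻¹ ≤ 2 := by
  have hy0 : 0 < y := one_pos.trans_le hy
  have hBernoulli : 1 + y ≤ 2 ^ y := by
    simpa [one_add_one_eq_two] using one_add_mul_self_le_rpow_one_add (s := 1) (by norm_num) hy
  calc y ^ y⁻¹ ≤ (2 ^ y) ^ y⁻¹ := Real.rpow_le_rpow hy0.le (by linarith) (inv_nonneg.2 hy0.le)
    _ = 2 := by rw [← Real.rpow_mul zero_le_two, mul_inv_cancel₀ hy0.ne', Real.rpow_one]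

lemma inv_two_le_rpow_self {x : ℝ} (hx0 : 0 < x) (hx1 : x ≤ 1) : 2⁻¹ ≤ x ^ x := by
  have h := rpow_inv_le_two ((one_le_inv₀ hx0).2 hx1)
  rw [inv_inv, Real.inv_rpow hx0.le] at h
  exact inv_le_of_inv_le₀ (by positivity) h

lemma one_add_log_le_mul_rpow {x γ : ℝ} (hx : 1 ≤ x) (hγ : 0 < γ) :
    1 + Real.log x ≤ (1 + 1 / γ) * x ^ γ := by
  have hlog := Real.log_le_rpow_div (zero_le_one.trans hx) hγ
  have hpow := Real.one_le_rpow hx hγ.le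
  calc 1 + Real.log x ≤ x ^ γ + x ^ γ / γ := by linarith
    _ = (1 + 1 / γ) * x ^ γ := by ring

lemma add_one_div_mul_rpow_le {α q : ℝ} (hα : 0 < α) (hαq : α ≤ q) (hq : 1 ≤ q) :
    (1 + 2 * q / α) * (2 / α) ^ (1 / q) + 1 ≤ 8 * q * α ^ (-1 - 1 / q) := by
  have hq0 : 0 < q := one_pos.trans_le hq
  set a := α ^ (1 / q)
  have ha0 : 0 < a := Real.rpow_pos_of_pos hα _
  have ha2 : a ≤ 2 := calc
    a ≤ q ^ (1 / q) := Real.rpow_le_rpow hα.le hαq (by positivity)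
    _ ≤ 2 := by simpa [one_div] using rpow_inv_le_two hq
  have h2 : (2 : ℝ) ^ (1 / q) ≤ 2 :=
    Real.rpow_le_self_of_one_le one_le_two (by rw [div_le_one hq0]; exact hq)
  have hsplit : α ^ (-1 - 1 / q) = α⁻¹ * a⁻¹ := by
    rw [sub_eq_add_neg, Real.rpow_add hα, Real.rpow_neg_one, Real.rpow_neg hα.le]
  rw [Real.div_rpow zero_le_two hα.le, hsplit]
  have hqa : 1 ≤ 2 * q * α⁻¹ * a⁻¹ := by
    rw [le_mul_inv_iff₀ ha0, le_mul_inv_iff₀ hα]; nlinarith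
  calc (1 + 2 * q / α) * (2 ^ (1 / q) / a) + 1
      ≤ (3 * q / α) * (2 / a) + 1 := by
        gcongr
        rw [add_div' _ _ _ hα.ne']; gcongr; linarith
    _ ≤ 8 * q * (α⁻¹ * a⁻¹) := by
        have : (3 * q / α) * (2 / a) = 6 * (q * α⁻¹ * a⁻¹) := by ring
        nlinarith

lemma inv_two_le_rpow_one_sub {θ q : ℝ} (hθ1 : θ < 1) (hq : 1 ≤ q) :
    2⁻¹ ≤ ((1 + ((1 - θ) * q) ^ (1 / q)) * ((1 - θ) * q)) ^ (1 - θ) := by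
  set α := (1 - θ) * q
  have hα : 0 < α := by have := sub_pos.2 hθ1; positivity
  have hαle : α ≤ (1 + α ^ (1 / q)) * α := by
    have := Real.rpow_nonneg hα.le (1 / q); nlinarith
  rcases le_or_gt 1 α with h1 | h1
  · exact le_trans (by norm_num) (Real.one_le_rpow (h1.trans hαle) (by linarith))
  calc 2⁻¹ ≤ α ^ α := inv_two_le_rpow_self hα h1.le
    _ ≤ α ^ (1 - θ) := Real.rpow_le_rpow_of_exponent_ge hα h1.le (by nlinarith)
    _ ≤ _ := Real.rpow_le_rpow hα.le hαle (by linarith)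

lemma rpow_neg_one_sub_le_two_mul {θ q : ℝ} (hθ1 : θ < 1) (hq : 1 ≤ q) :
    ((1 - θ) * q) ^ (-1 - 1 / q)
      ≤ 2 * ((1 + ((1 - θ) * q) ^ (1 / q)) ^ (1 - θ) * ((1 - θ) * q) ^ (-θ - 1 / q)) := by
  have hZ := inv_two_le_rpow_one_sub hθ1 hq
  set α := (1 - θ) * q
  have hα : 0 < α := by have := sub_pos.2 hθ1; positivity
  have hfactor : (1 + α ^ (1 / q)) ^ (1 - θ) * α ^ (-θ - 1 / q)
      = ((1 + α ^ (1 / q)) * α) ^ (1 - θ) * α ^ (-1 - 1 / q) := by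
    rw [Real.mul_rpow (by positivity) hα.le, mul_assoc, ← Real.rpow_add hα]
    ring_nf
  rw [hfactor]
  have := Real.rpow_pos_of_pos hα (-1 - 1 / q)
  nlinarith

lemma lintegral_Ioc_rpow_sub_one {β r : ℝ} (hβ : 0 < β) (hr : 0 ≤ r) :
    ∫⁻ t in Ioc 0 r, ENNReal.ofReal (t ^ (β - 1)) = ENNReal.ofReal (r ^ β / β) := by
  have hexp : -1 < β - 1 := by linarith
  rw [← ofReal_integral_eq_lintegral_ofReal
      ((intervalIntegrable_iff_integrableOn_Ioc_of_le hr).1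
        (intervalIntegral.intervalIntegrable_rpow' hexp))
      ((ae_restrict_iff' measurableSet_Ioc).2 (ae_of_all _ fun t ht => Real.rpow_nonneg ht.1.le _)),
    ← intervalIntegral.integral_of_le hr, integral_rpow (Or.inl hexp), sub_add_cancel,
    Real.zero_rpow hβ.ne', sub_zero]

section KFunctional

variable {K : ℝ → ℝ} {A M : ℝ}

lemma deriv_nonneg_of_monotoneOn (hmono : MonotoneOn K (Ioi 0)) {t : ℝ} (ht : 0 < t) :
    0 ≤ deriv K t := by
  rw [← derivWithin_of_isOpen isOpen_Ioi (mem_Ioi.2 ht)]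
  exact hmono.derivWithin_nonneg

lemma mul_deriv_le_of_concaveOn (hK0 : ∀ t, 0 < t → 0 ≤ K t) (hconc : ConcaveOn ℝ (Ioi 0) K)
    {t : ℝ} (ht : 0 < t) (hdiff : DifferentiableAt ℝ K t) : t * deriv K t ≤ K t := by
  have hchord : ∀ s ∈ Ioo 0 t, (t - s) * deriv K t ≤ K t := fun s hs => by
    have hslope := hconc.deriv_le_slope hs.1 ht hs.2 hdiff
    rw [slope_def_field, le_div_iff₀ (sub_pos.2 hs.2)] at hslope
    linarith [hK0 s hs.1]
  have hlim : Tendsto (fun s => (t - s) * deriv K t) (𝓝[>] 0) (𝓝 (t * deriv K t)) :=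
    tendsto_nhdsWithin_of_tendsto_nhds
      (((continuous_const.sub continuous_id).mul continuous_const).tendsto' 0 _ (by simp))
  exact le_of_tendsto hlim (eventually_of_mem (Ioo_mem_nhdsGT ht) hchord)

lemma le_of_tendsto_of_monotoneOn (hmono : MonotoneOn K (Ioi 0)) (hA : Tendsto K atTop (𝓝 A))
    {t : ℝ} (ht : 0 < t) : K t ≤ A :=
  ge_of_tendsto hA <| (eventually_ge_atTop t).mono fun _ hs =>
    hmono ht (ht.trans_le hs) hs

lemma div_le_div_add_mul_log (hdiff : ∀ t, 0 < t → DifferentiableAt ℝ K t)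
    (hM : ∀ t, 0 < t → K t / t - deriv K t ≤ M) {s u : ℝ} (hs : 0 < s) (hsu : s ≤ u) :
    K s / s ≤ K u / u + M * Real.log (u / s) := by
  have hderiv : ∀ x ∈ Ioi (0 : ℝ), HasDerivAt (fun u => K u / u + M * Real.log u)
      ((deriv K x * x - K x * 1) / x ^ 2 + M * x⁻¹) x := fun x hx =>
    ((hdiff x hx).hasDerivAt.div (hasDerivAt_id x) (ne_of_gt hx)).add
      ((Real.hasDerivAt_log (ne_of_gt hx)).const_mul M)
  have hmonoOn : MonotoneOn (fun u => K u / u + M * Real.log u) (Ioi 0) := by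
    refine monotoneOn_of_deriv_nonneg (convex_Ioi 0)
      (fun x hx => (hderiv x hx).continuousAt.continuousWithinAt)
      (fun x hx => (hderiv x (interior_subset hx)).differentiableAt.differentiableWithinAt)
      fun x hx => ?_
    rw [interior_Ioi] at hx
    have hx0 : (0 : ℝ) < x := hx
    rw [(hderiv x hx).deriv]
    have hKx : K x ≤ (M + deriv K x) * x := by
      rw [← div_le_iff₀ hx0]; linarith [hM x hx0]
    have : (deriv K x * x - K x * 1) / x ^ 2 + M * x⁻¹
        = (deriv K x * x - K x + M * x) / x ^ 2 := by field_simp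
    rw [this]
    exact div_nonneg (by nlinarith) (by positivity)
  have h := hmonoOn hs (hs.trans_le hsu) hsu
  simp only at h
  rw [Real.log_div (hs.trans_le hsu).ne' hs.ne']
  linarith

lemma setLIntegral_Ioi_deriv_le (hK0 : ∀ t, 0 < t → 0 ≤ K t) (hmono : MonotoneOn K (Ioi 0))
    (hdiff : ∀ t, 0 < t → DifferentiableAt ℝ K t) (hA : Tendsto K atTop (𝓝 A))
    {r : ℝ} (hr : 0 < r) :
    ∫⁻ t in Ioi r, ENNReal.ofReal (deriv K t) ≤ ENNReal.ofReal A := by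
  have hderiv : ∀ x ∈ Ici r, HasDerivAt K (deriv K x) x := fun x hx =>
    (hdiff x (hr.trans_le hx)).hasDerivAt
  have hpos : ∀ x ∈ Ioi r, 0 ≤ deriv K x := fun x hx =>
    deriv_nonneg_of_monotoneOn hmono (hr.trans hx)
  rw [← ofReal_integral_eq_lintegral_ofReal (integrableOn_Ioi_deriv_of_nonneg' hderiv hpos hA)
      ((ae_restrict_iff' measurableSet_Ioi).2 (ae_of_all _ hpos)),
    integral_Ioi_of_hasDerivAt_of_nonneg' hderiv hpos hA]
  exact ENNReal.ofReal_le_ofReal (by linarith [hK0 r hr])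

lemma deriv_le_mul_one_add_log (hK0 : ∀ t, 0 < t → 0 ≤ K t) (hconc : ConcaveOn ℝ (Ioi 0) K)
    (hdiff : ∀ t, 0 < t → DifferentiableAt ℝ K t) (hM : ∀ t, 0 < t → K t / t - deriv K t ≤ M)
    {r t : ℝ} (ht : 0 < t) (htr : t ≤ r) (hKr : K r ≤ M * r) :
    deriv K t ≤ M * (1 + Real.log (r / t)) := by
  have hr : 0 < r := ht.trans_le htr
  have h1 : deriv K t ≤ K t / t := by
    rw [le_div_iff₀ ht]; linarith [mul_deriv_le_of_concaveOn hK0 hconc ht (hdiff t ht)]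
  have h2 : K r / r ≤ M := by rwa [div_le_iff₀ hr]
  linarith [div_le_div_add_mul_log hdiff hM ht htr]

lemma rpow_mul_deriv_rpow_le_of_le (hK0 : ∀ t, 0 < t → 0 ≤ K t)
    (hmono : MonotoneOn K (Ioi 0)) (hconc : ConcaveOn ℝ (Ioi 0) K)
    (hdiff : ∀ t, 0 < t → DifferentiableAt ℝ K t) (hM : ∀ t, 0 < t → K t / t - deriv K t ≤ M)
    {α q r t : ℝ} (hα : 0 < α) (hq : 0 < q) (hM0 : 0 < M) (hKr : K r ≤ M * r)
    (ht : 0 < t) (htr : t ≤ r) :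
    t ^ (α - 1) * deriv K t ^ q
      ≤ M ^ q * (1 + 2 * q / α) ^ q * r ^ (α / 2) * t ^ (α / 2 - 1) := by
  have hr : 0 < r := ht.trans_le htr
  set G := 1 + 2 * q / α
  have hlog : 1 + Real.log (r / t) ≤ G * (r / t) ^ (α / (2 * q)) := by
    convert one_add_log_le_mul_rpow ((one_le_div ht).2 htr) (by positivity : 0 < α / (2 * q))
      using 3
    field_simp
  have hderiv : deriv K t ≤ M * (G * (r / t) ^ (α / (2 * q))) :=
    (deriv_le_mul_one_add_log hK0 hconc hdiff hM ht htr hKr).trans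
      (mul_le_mul_of_nonneg_left hlog hM0.le)
  calc t ^ (α - 1) * deriv K t ^ q
      ≤ t ^ (α - 1) * (M * (G * (r / t) ^ (α / (2 * q)))) ^ q := by
        gcongr
        exact deriv_nonneg_of_monotoneOn hmono ht
    _ = t ^ (α - 1) * (M ^ q * G ^ q * (r ^ (α / 2) / t ^ (α / 2))) := by
        rw [Real.mul_rpow hM0.le (by positivity), Real.mul_rpow (by positivity) (by positivity),
          ← Real.rpow_mul (by positivity), Real.div_rpow hr.le ht.le]
        field_simp
    _ = M ^ q * G ^ q * r ^ (α / 2) * t ^ (α / 2 - 1) := by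
        rw [show α / 2 - 1 = (α - 1) - α / 2 by ring, Real.rpow_sub ht (α - 1) (α / 2)]
        ring

lemma setLIntegral_Ioc_rpow_mul_deriv_rpow_le (hK0 : ∀ t, 0 < t → 0 ≤ K t)
    (hmono : MonotoneOn K (Ioi 0)) (hconc : ConcaveOn ℝ (Ioi 0) K)
    (hdiff : ∀ t, 0 < t → DifferentiableAt ℝ K t) (hM : ∀ t, 0 < t → K t / t - deriv K t ≤ M)
    {α q r : ℝ} (hα : 0 < α) (hq : 0 < q) (hM0 : 0 < M) (hr : 0 < r) (hKr : K r ≤ M * r) :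
    ∫⁻ t in Ioc 0 r, ENNReal.ofReal (t ^ (α - 1) * deriv K t ^ q)
      ≤ ENNReal.ofReal (M ^ q * (1 + 2 * q / α) ^ q * r ^ α * (2 / α)) := by
  set G := 1 + 2 * q / α
  have hc : 0 ≤ M ^ q * G ^ q * r ^ (α / 2) := by positivity
  calc ∫⁻ t in Ioc 0 r, ENNReal.ofReal (t ^ (α - 1) * deriv K t ^ q)
      ≤ ∫⁻ t in Ioc 0 r,
          ENNReal.ofReal (M ^ q * G ^ q * r ^ (α / 2)) * ENNReal.ofReal (t ^ (α / 2 - 1)) :=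
        setLIntegral_mono' measurableSet_Ioc fun t ht => by
          rw [← ENNReal.ofReal_mul hc]
          exact ENNReal.ofReal_le_ofReal
            (rpow_mul_deriv_rpow_le_of_le hK0 hmono hconc hdiff hM hα hq hM0 hKr ht.1 ht.2)
    _ = ENNReal.ofReal (M ^ q * G ^ q * r ^ (α / 2) * (r ^ (α / 2) / (α / 2))) := by
        rw [lintegral_const_mul' _ _ ENNReal.ofReal_ne_top,
          lintegral_Ioc_rpow_sub_one (by positivity) hr.le, ← ENNReal.ofReal_mul hc]
    _ = ENNReal.ofReal (M ^ q * G ^ q * r ^ α * (2 / α)) := by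
        rw [show r ^ α = r ^ (α / 2) * r ^ (α / 2) by rw [← Real.rpow_add hr]; ring_nf]
        field_simp

lemma rpow_mul_deriv_rpow_le_of_lt (hK0 : ∀ t, 0 < t → 0 ≤ K t)
    (hmono : MonotoneOn K (Ioi 0)) (hconc : ConcaveOn ℝ (Ioi 0) K)
    (hdiff : ∀ t, 0 < t → DifferentiableAt ℝ K t) (hA : Tendsto K atTop (𝓝 A))
    {α q r t : ℝ} (hαq : α ≤ q) (hq : 1 ≤ q) (hr : 0 < r) (hrt : r < t) :
    t ^ (α - 1) * deriv K t ^ q ≤ A ^ (q - 1) * r ^ (α - q) * deriv K t := by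
  have ht : 0 < t := hr.trans hrt
  have hA0 : 0 ≤ A := (hK0 t ht).trans (le_of_tendsto_of_monotoneOn hmono hA ht)
  have hd0 := deriv_nonneg_of_monotoneOn hmono ht
  have hdA : deriv K t ≤ A / t := by
    rw [le_div_iff₀ ht]
    linarith [mul_deriv_le_of_concaveOn hK0 hconc ht (hdiff t ht),
      le_of_tendsto_of_monotoneOn hmono hA ht]
  calc t ^ (α - 1) * deriv K t ^ q = t ^ (α - 1) * deriv K t ^ (q - 1) * deriv K t := by
        rw [mul_assoc, ← Real.rpow_add_one' hd0 (by linarith), sub_add_cancel]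
    _ ≤ t ^ (α - 1) * (A / t) ^ (q - 1) * deriv K t := by
        gcongr t ^ (α - 1) * ?_ * _
        exact Real.rpow_le_rpow hd0 hdA (by linarith)
    _ = A ^ (q - 1) * t ^ (α - q) * deriv K t := by
        rw [Real.div_rpow hA0 ht.le, show α - q = (α - 1) - (q - 1) by ring,
          Real.rpow_sub ht (α - 1) (q - 1)]
        ring
    _ ≤ A ^ (q - 1) * r ^ (α - q) * deriv K t := by
        gcongr A ^ (q - 1) * ?_ * _
        exact Real.rpow_le_rpow_of_nonpos hr hrt.le (sub_nonpos.2 hαq)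

lemma setLIntegral_Ioi_rpow_mul_deriv_rpow_le (hK0 : ∀ t, 0 < t → 0 ≤ K t)
    (hmono : MonotoneOn K (Ioi 0)) (hconc : ConcaveOn ℝ (Ioi 0) K)
    (hdiff : ∀ t, 0 < t → DifferentiableAt ℝ K t) (hA : Tendsto K atTop (𝓝 A))
    {α q r : ℝ} (hαq : α ≤ q) (hq : 1 ≤ q) (hr : 0 < r) :
    ∫⁻ t in Ioi r, ENNReal.ofReal (t ^ (α - 1) * deriv K t ^ q)
      ≤ ENNReal.ofReal (A ^ q * r ^ (α - q)) := by
  have hA0 : 0 ≤ A := (hK0 r hr).trans (le_of_tendsto_of_monotoneOn hmono hA hr)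
  have hc : 0 ≤ A ^ (q - 1) * r ^ (α - q) := by positivity
  calc ∫⁻ t in Ioi r, ENNReal.ofReal (t ^ (α - 1) * deriv K t ^ q)
      ≤ ∫⁻ t in Ioi r, ENNReal.ofReal (A ^ (q - 1) * r ^ (α - q)) * ENNReal.ofReal (deriv K t) :=
        setLIntegral_mono' measurableSet_Ioi fun t ht => by
          rw [← ENNReal.ofReal_mul hc]
          exact ENNReal.ofReal_le_ofReal
            (rpow_mul_deriv_rpow_le_of_lt hK0 hmono hconc hdiff hA hαq hq hr ht)
    _ ≤ ENNReal.ofReal (A ^ (q - 1) * r ^ (α - q)) * ENNReal.ofReal A := by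
        rw [lintegral_const_mul' _ _ ENNReal.ofReal_ne_top]
        gcongr
        exact setLIntegral_Ioi_deriv_le hK0 hmono hdiff hA hr
    _ = ENNReal.ofReal (A ^ q * r ^ (α - q)) := by
        rw [← ENNReal.ofReal_mul hc, mul_right_comm,
          ← Real.rpow_add_one' hA0 (by linarith), sub_add_cancel]

lemma setLIntegral_Ioi_zero_rpow_mul_deriv_rpow_le (hK0 : ∀ t, 0 < t → 0 ≤ K t)
    (hmono : MonotoneOn K (Ioi 0)) (hconc : ConcaveOn ℝ (Ioi 0) K)
    (hdiff : ∀ t, 0 < t → DifferentiableAt ℝ K t) (hA : Tendsto K atTop (𝓝 A))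
    (hM : ∀ t, 0 < t → K t / t - deriv K t ≤ M) {α q : ℝ} (hα : 0 < α) (hαq : α ≤ q)
    (hq : 1 ≤ q) (hA0 : 0 < A) (hM0 : 0 < M) :
    ∫⁻ t in Ioi 0, ENNReal.ofReal (t ^ (α - 1) * deriv K t ^ q)
      ≤ ENNReal.ofReal (A ^ α * M ^ (q - α) * ((1 + 2 * q / α) ^ q * (2 / α) + 1)) := by
  have hq0 : 0 < q := one_pos.trans_le hq
  -- At `r = A / M` both pieces are of size `A ^ α * M ^ (q - α)`.
  set r := A / M
  have hr : 0 < r := div_pos hA0 hM0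
  have hKr : K r ≤ M * r := by
    rw [mul_div_cancel₀ A hM0.ne']; exact le_of_tendsto_of_monotoneOn hmono hA hr
  have hsmall : M ^ q * r ^ α = A ^ α * M ^ (q - α) := by
    rw [Real.div_rpow hA0.le hM0.le, Real.rpow_sub hM0]; field_simp
  have hlarge : A ^ q * r ^ (α - q) = A ^ α * M ^ (q - α) := by
    rw [Real.div_rpow hA0.le hM0.le, Real.rpow_sub hA0, Real.rpow_sub hM0, Real.rpow_sub hM0]
    field_simp
  rw [← Ioc_union_Ioi_eq_Ioi hr.le, lintegral_union measurableSet_Ioi Ioc_disjoint_Ioi_same]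
  calc _ ≤ ENNReal.ofReal (M ^ q * (1 + 2 * q / α) ^ q * r ^ α * (2 / α))
        + ENNReal.ofReal (A ^ q * r ^ (α - q)) :=
        add_le_add
          (setLIntegral_Ioc_rpow_mul_deriv_rpow_le hK0 hmono hconc hdiff hM hα hq0 hM0 hr hKr)
          (setLIntegral_Ioi_rpow_mul_deriv_rpow_le hK0 hmono hconc hdiff hA hαq hq hr)
    _ = _ := by
        rw [← ENNReal.ofReal_add (by positivity) (by positivity)]
        congr 1
        rw [mul_right_comm (M ^ q), hsmall, hlarge]
        ring

lemma eqOn_zero_or_pos (hK0 : ∀ t, 0 < t → 0 ≤ K t) (hmono : MonotoneOn K (Ioi 0))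
    (hdiff : ∀ t, 0 < t → DifferentiableAt ℝ K t) (hA : Tendsto K atTop (𝓝 A))
    (hM : ∀ t, 0 < t → K t / t - deriv K t ≤ M) :
    EqOn K 0 (Ioi 0) ∨ (0 < A ∧ 0 < M) := by
  by_contra! h
  obtain ⟨hK, hpos⟩ := h
  obtain ⟨t₀, ht₀, hKt₀⟩ : ∃ t₀, 0 < t₀ ∧ 0 < K t₀ := by
    simp only [EqOn, mem_Ioi, Pi.zero_apply, not_forall] at hK
    obtain ⟨t₀, ht₀, hne⟩ := hK
    exact ⟨t₀, ht₀, (hK0 t₀ ht₀).lt_of_ne' hne⟩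
  have hA0 : 0 < A := hKt₀.trans_le (le_of_tendsto_of_monotoneOn hmono hA ht₀)
  -- With `M ≤ 0`, `K u / u` would be nondecreasing, yet it is at most `A / u → 0`.
  have hle : ∀ᶠ u in atTop, K t₀ / t₀ ≤ A / u := by
    filter_upwards [eventually_ge_atTop t₀] with u htu
    have hu : 0 < u := ht₀.trans_le htu
    have hlog : 0 ≤ Real.log (u / t₀) := Real.log_nonneg ((one_le_div ht₀).2 htu)
    have hKu : K u / u ≤ A / u :=
      div_le_div_of_nonneg_right (le_of_tendsto_of_monotoneOn hmono hA hu) hu.le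
    nlinarith [div_le_div_add_mul_log hdiff hM ht₀ htu, hpos hA0]
  have := ge_of_tendsto (tendsto_const_nhds.div_atTop tendsto_id) hle
  exact (div_pos hKt₀ ht₀).not_ge this

lemma setLIntegral_eq_zero_of_eqOn_zero (hK : EqOn K 0 (Ioi 0)) {θ q : ℝ} (hq : 0 < q) :
    ∫⁻ t in Ioi 0, ENNReal.ofReal ((t ^ (1 - θ) * deriv K t) ^ q / t) = 0 := by
  rw [← lintegral_zero (μ := volume.restrict (Ioi (0 : ℝ)))]
  refine setLIntegral_congr_fun measurableSet_Ioi fun t ht => ?_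
  rw [(hK.eventuallyEq_of_mem (isOpen_Ioi.mem_nhds ht)).deriv_eq, Pi.zero_def, deriv_const,
    mul_zero, Real.zero_rpow hq.ne', zero_div, ENNReal.ofReal_zero]

lemma rpow_one_div_setLIntegral_le (hK0 : ∀ t, 0 < t → 0 ≤ K t) (hmono : MonotoneOn K (Ioi 0))
    (hconc : ConcaveOn ℝ (Ioi 0) K) (hdiff : ∀ t, 0 < t → DifferentiableAt ℝ K t)
    (hA : Tendsto K atTop (𝓝 A)) (hM : ∀ t, 0 < t → K t / t - deriv K t ≤ M)
    {θ q : ℝ} (hθ0 : 0 ≤ θ) (hθ1 : θ < 1) (hq : 1 ≤ q) (hA0 : 0 < A) (hM0 : 0 < M) :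
    (∫⁻ t in Ioi 0, ENNReal.ofReal ((t ^ (1 - θ) * deriv K t) ^ q / t)) ^ (1 / q)
      ≤ ENNReal.ofReal (8 * q * ((1 - θ) * q) ^ (-1 - 1 / q) * (A ^ (1 - θ) * M ^ θ)) := by
  have hq0 : 0 < q := one_pos.trans_le hq
  set α := (1 - θ) * q
  have hα : 0 < α := by have := sub_pos.2 hθ1; positivity
  have hαq : α ≤ q := by nlinarith
  set G := 1 + 2 * q / α
  have hG : 0 < G := by positivity
  have hintegrand : EqOn (fun t => ENNReal.ofReal ((t ^ (1 - θ) * deriv K t) ^ q / t))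
      (fun t => ENNReal.ofReal (t ^ (α - 1) * deriv K t ^ q)) (Ioi 0) := fun t ht => by
    have ht : (0 : ℝ) < t := ht
    dsimp only
    rw [Real.mul_rpow (by positivity) (deriv_nonneg_of_monotoneOn hmono ht),
      ← Real.rpow_mul ht.le, Real.rpow_sub_one ht.ne', div_mul_eq_mul_div]
  have hP : (A ^ α * M ^ (q - α)) ^ (1 / q) = A ^ (1 - θ) * M ^ θ := by
    rw [Real.mul_rpow (by positivity) (by positivity), ← Real.rpow_mul hA0.le,
      ← Real.rpow_mul hM0.le]
    congr 2 <;> field_simp <;> ring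
  have ha : (G ^ q * (2 / α)) ^ (1 / q) = G * (2 / α) ^ (1 / q) := by
    rw [Real.mul_rpow (by positivity) (by positivity), ← Real.rpow_mul hG.le,
      mul_one_div_cancel hq0.ne', Real.rpow_one]
  have hreal : (A ^ α * M ^ (q - α) * (G ^ q * (2 / α) + 1)) ^ (1 / q)
      ≤ 8 * q * α ^ (-1 - 1 / q) * (A ^ (1 - θ) * M ^ θ) := calc
    _ = (A ^ (1 - θ) * M ^ θ) * (G ^ q * (2 / α) + 1) ^ (1 / q) := by
        rw [Real.mul_rpow (by positivity) (by positivity), hP]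
    _ ≤ (A ^ (1 - θ) * M ^ θ) * (G * (2 / α) ^ (1 / q) + 1) := by
        gcongr
        rw [← ha]
        simpa using Real.rpow_add_le_add_rpow (by positivity : 0 ≤ G ^ q * (2 / α)) zero_le_one
          (by positivity : 0 ≤ 1 / q) ((div_le_one hq0).2 hq)
    _ ≤ (A ^ (1 - θ) * M ^ θ) * (8 * q * α ^ (-1 - 1 / q)) := by
        gcongr
        exact add_one_div_mul_rpow_le hα hαq hq
    _ = _ := by ring
  rw [setLIntegral_congr_fun measurableSet_Ioi hintegrand]
  calc _ ≤ ENNReal.ofReal (A ^ α * M ^ (q - α) * (G ^ q * (2 / α) + 1)) ^ (1 / q) :=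
        ENNReal.rpow_le_rpow
          (setLIntegral_Ioi_zero_rpow_mul_deriv_rpow_le hK0 hmono hconc hdiff hA hM hα hαq hq hA0 hM0)
          (by positivity)
    _ ≤ _ := by
        rw [ENNReal.ofReal_rpow_of_nonneg (by positivity) (by positivity)]
        exact ENNReal.ofReal_le_ofReal hreal

end KFunctional

end JohnNirenberg

open JohnNirenberg in
/-- Abstract (scalar) form of the generalized John–Nirenberg inequality:
with `K` a K-functional (nonnegative, nondecreasing, concave, differentiable),
`A = lim_{t→∞} K(t)` and `M ≥ sup_{t>0} (K(t)/t - K'(t))`, one has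
`(∫_0^∞ (t^{1-θ}K'(t))^q dt/t)^{1/q}
  ≤ c q (1+[(1-θ)q]^{1/q})^{1-θ} [(1-θ)q]^{-θ-1/q} A^{1-θ} M^{θ}`,
and in particular `≤ c q A^{1-θ} M^{θ}` when `(1-θ)q = 1`. -/
theorem stmt16 : ∃ c : ℝ, 0 < c ∧
    ∀ (K : ℝ → ℝ) (A M θ q : ℝ),
    (∀ t, 0 < t → 0 ≤ K t) → MonotoneOn K (Ioi 0) → ConcaveOn ℝ (Ioi 0) K →
    (∀ t, 0 < t → DifferentiableAt ℝ K t) →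
    Tendsto K atTop (nhds A) →
    (∀ t, 0 < t → K t / t - deriv K t ≤ M) →
    0 ≤ θ → θ < 1 → 1 ≤ q →
    ((∫⁻ t in Ioi (0:ℝ), ENNReal.ofReal ((t ^ (1 - θ) * deriv K t) ^ q / t)) ^ (1/q)
        ≤ ENNReal.ofReal (c * q * (1 + ((1 - θ) * q) ^ (1/q)) ^ (1 - θ) *
            ((1 - θ) * q) ^ (-θ - 1/q) * (A ^ (1 - θ) * M ^ θ))) ∧
      ((1 - θ) * q = 1 →
        (∫⁻ t in Ioi (0:ℝ), ENNReal.ofReal ((t ^ (1 - θ) * deriv K t) ^ q / t)) ^ (1/q)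
          ≤ ENNReal.ofReal (c * q * (A ^ (1 - θ) * M ^ θ))) := by
  refine ⟨16, by norm_num, fun K A M θ q hK0 hmono hconc hdiff hA hM hθ0 hθ1 hq => ?_⟩
  have hq0 : 0 < q := one_pos.trans_le hq
  rcases eqOn_zero_or_pos hK0 hmono hdiff hA hM with hK | ⟨hA0, hM0⟩
  · rw [setLIntegral_eq_zero_of_eqOn_zero hK hq0, ENNReal.zero_rpow_of_pos (by positivity)]
    exact ⟨bot_le, fun _ => bot_le⟩
  have hbound := rpow_one_div_setLIntegral_le hK0 hmono hconc hdiff hA hM hθ0 hθ1 hq hA0 hM0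
  have hB : 0 < A ^ (1 - θ) * M ^ θ := by positivity
  refine ⟨hbound.trans (ENNReal.ofReal_le_ofReal ?_),
    fun hα => hbound.trans (ENNReal.ofReal_le_ofReal ?_)⟩
  · have := rpow_neg_one_sub_le_two_mul hθ1 hq
    calc 8 * q * ((1 - θ) * q) ^ (-1 - 1 / q) * (A ^ (1 - θ) * M ^ θ)
        ≤ 8 * q * (2 * ((1 + ((1 - θ) * q) ^ (1 / q)) ^ (1 - θ) * ((1 - θ) * q) ^ (-θ - 1 / q)))
          * (A ^ (1 - θ) * M ^ θ) := by gcongr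
      _ = _ := by ring
  · rw [hα, Real.one_rpow]
    nlinarith
end

section
/- Let $f$ be a measurable function on a measure space with distribution function $\lambda_f(s) = \mu\{|f| > s\}$ and nonincreasing rearrangement $f^*$. Then for all $t > 0$ with $\lambda_f$ finite on $(0,\infty)$: $t\,(f^{**}(t) - f^*(t)) = \int_{f^*(t)}^{\infty} \lambda_f(u)\,du$, where $f^{**}(t) = \frac{1}{t}\int_0^t f^*(s)\,ds$. -/
/-!
Layer-cake formula on `(0, t]` for `f^*`: the sets `{s ∈ (0, t] | u < f^*(s)}` have length
`min(t, λ_f(u))`, which is `t` for `u < f^*(t)` and `λ_f(u)` for `u ≥ f^*(t)`. Hence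
`∫_0^t f^* = t f^*(t) + ∫_{f^*(t)}^∞ λ_f`. Everything rests on the duality
`f^*(s) ≤ u ↔ λ_f(u) ≤ s`, which comes from the right continuity of `λ_f`.
-/

open Set MeasureTheory Filter Topology
open scoped ENNReal

section Rearrangement

variable {α : Type*} [MeasurableSpace α] {μ : Measure α} {h : α → ℝ}

lemma measure_lt_le_of_forall_gt {u : ℝ} {c : ℝ≥0∞}
    (hc : ∀ r, u < r → μ {x | r < h x} ≤ c) : μ {x | u < h x} ≤ c := by
  obtain ⟨r, hr_anti, hr_gt, hr_lim⟩ := exists_seq_strictAnti_tendsto u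
  have hunion : {x | u < h x} = ⋃ n, {x | r n < h x} := by
    ext x
    simp only [mem_ofPred_eq, mem_iUnion]
    exact ⟨fun hx => (hr_lim.eventually (gt_mem_nhds hx)).exists,
      fun ⟨n, hn⟩ => (hr_gt n).trans hn⟩
  have hmono : Monotone fun n => {x | r n < h x} :=
    fun m n hmn x hx => (hr_anti.antitone hmn).trans_lt hx
  rw [hunion, hmono.measure_iUnion]
  exact iSup_le fun n => hc _ (hr_gt n)

lemma exists_nonneg_measure_lt_le (hh : Measurable h) (hfin : ∃ r, μ {x | r < h x} ≠ ∞)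
    {s : ℝ} (hs : 0 < s) : ∃ r, 0 ≤ r ∧ μ {x | r < h x} ≤ ENNReal.ofReal s := by
  have hanti : Antitone fun n : ℕ => {x | (n : ℝ) < h x} :=
    fun m n hmn x (hx : (n : ℝ) < h x) =>
      show (m : ℝ) < h x from (Nat.cast_le.2 hmn).trans_lt hx
  have hempty : ⋂ n : ℕ, {x | (n : ℝ) < h x} = ∅ := by
    refine eq_empty_of_forall_notMem fun x hx => ?_
    obtain ⟨n, hn⟩ := exists_nat_ge (h x)
    exact (mem_iInter.1 hx n).not_ge hn
  have hfin' : ∃ n : ℕ, μ {x | (n : ℝ) < h x} ≠ ∞ := by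
    obtain ⟨r, hr⟩ := hfin
    obtain ⟨n, hn⟩ := exists_nat_ge r
    exact ⟨n, ne_top_of_le_ne_top hr (measure_mono fun x hx => hn.trans_lt hx)⟩
  have hlim := tendsto_measure_iInter_atTop
    (fun _ => (measurableSet_lt measurable_const hh).nullMeasurableSet) hanti hfin'
  rw [hempty, measure_empty] at hlim
  obtain ⟨n, hn⟩ := (hlim.eventually (gt_mem_nhds (ENNReal.ofReal_pos.2 hs))).exists
  exact ⟨n, n.cast_nonneg, hn.le⟩

lemma antitone_measure_lt : Antitone fun u : ℝ => μ {x | u < h x} :=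
  fun _ _ huv => measure_mono fun _ hx => huv.trans_lt hx

variable (μ h) in
lemma rearr_nonneg (s : ℝ) : 0 ≤ rearr μ h s :=
  Real.sInf_nonneg fun _ hr => hr.1

variable (hh : Measurable h) (hfin : ∃ r, μ {x | r < h x} ≠ ∞)
include hh hfin

lemma rearr_le_iff {s u : ℝ} (hs : 0 < s) (hu : 0 ≤ u) :
    rearr μ h s ≤ u ↔ μ {x | u < h x} ≤ ENNReal.ofReal s := by
  have hbdd : BddBelow {r : ℝ | 0 ≤ r ∧ μ {x | r < h x} ≤ ENNReal.ofReal s} :=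
    ⟨0, fun _ hr => hr.1⟩
  refine ⟨fun hle => measure_lt_le_of_forall_gt fun r hur => ?_,
    fun hle => csInf_le hbdd ⟨hu, hle⟩⟩
  obtain ⟨a, ha, har⟩ :=
    (csInf_lt_iff hbdd (exists_nonneg_measure_lt_le hh hfin hs)).1 (hle.trans_lt hur)
  exact (measure_mono fun x hx => har.trans hx).trans ha.2

lemma lt_rearr_iff {s u : ℝ} (hs : 0 < s) (hu : 0 ≤ u) :
    u < rearr μ h s ↔ ENNReal.ofReal s < μ {x | u < h x} := by
  simpa only [not_le] using (rearr_le_iff hh hfin hs hu).not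

lemma rearr_antitoneOn : AntitoneOn (rearr μ h) (Ioi 0) := fun s hs _ _ hst =>
  (rearr_le_iff hh hfin (hs.trans_le hst) (rearr_nonneg μ h s)).2 <|
    ((rearr_le_iff hh hfin hs (rearr_nonneg μ h s)).1 le_rfl).trans (ENNReal.ofReal_le_ofReal hst)

lemma restrict_Ioc_lt_rearr_of_lt {t u : ℝ} (hu : u < rearr μ h t) :
    volume.restrict (Ioc 0 t) {s | u < rearr μ h s} = ENNReal.ofReal t := by
  have hsub : Ioc 0 t ⊆ {s | u < rearr μ h s} := fun s hs =>
    hu.trans_le (rearr_antitoneOn hh hfin hs.1 (hs.1.trans_le hs.2) hs.2)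
  rw [Measure.restrict_apply' measurableSet_Ioc, inter_eq_self_of_subset_right hsub,
    Real.volume_Ioc, sub_zero]

lemma restrict_Ioc_lt_rearr_of_le {t u : ℝ} (ht : 0 < t) (hu : rearr μ h t ≤ u) :
    volume.restrict (Ioc 0 t) {s | u < rearr μ h s} = μ {x | u < h x} := by
  have hu0 : 0 ≤ u := (rearr_nonneg μ h t).trans hu
  have hle : μ {x | u < h x} ≤ ENNReal.ofReal t := (rearr_le_iff hh hfin ht hu0).1 hu
  obtain ⟨l, hl⟩ : ∃ l : ℝ, μ {x | u < h x} = ENNReal.ofReal l :=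
    ⟨_, (ENNReal.ofReal_toReal (ne_top_of_le_ne_top ENNReal.ofReal_ne_top hle)).symm⟩
  have hset : {s | u < rearr μ h s} ∩ Ioc 0 t = Ioo 0 l := by
    ext s
    simp only [mem_inter_iff, mem_ofPred_eq, mem_Ioc, mem_Ioo]
    constructor
    · rintro ⟨hus, hs, -⟩
      rw [lt_rearr_iff hh hfin hs hu0, hl] at hus
      exact ⟨hs, (ENNReal.ofReal_lt_ofReal_iff_of_nonneg hs.le).1 hus⟩
    · rintro ⟨hs, hsl⟩
      have hst : ENNReal.ofReal s < ENNReal.ofReal t :=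
        ((ENNReal.ofReal_lt_ofReal_iff_of_nonneg hs.le).2 hsl).trans_le (hl ▸ hle)
      refine ⟨?_, hs, ((ENNReal.ofReal_lt_ofReal_iff ht).1 hst).le⟩
      rw [lt_rearr_iff hh hfin hs hu0, hl]
      exact (ENNReal.ofReal_lt_ofReal_iff_of_nonneg hs.le).2 hsl
  rw [Measure.restrict_apply' measurableSet_Ioc, hset, Real.volume_Ioo, sub_zero, hl]

theorem setLIntegral_Ioc_rearr {t : ℝ} (ht : 0 < t) :
    ∫⁻ s in Ioc 0 t, ENNReal.ofReal (rearr μ h s)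
      = ENNReal.ofReal t * ENNReal.ofReal (rearr μ h t)
        + ∫⁻ u in Ioi (rearr μ h t), μ {x | u < h x} := by
  have hanti : AntitoneOn (rearr μ h) (Ioc 0 t) :=
    (rearr_antitoneOn hh hfin).mono Ioc_subset_Ioi_self
  rw [lintegral_eq_lintegral_meas_lt _ (ae_of_all _ (rearr_nonneg μ h))
      (aemeasurable_restrict_of_antitoneOn measurableSet_Ioc hanti),
    ← Ioc_union_Ioi_eq_Ioi (rearr_nonneg μ h t),
    lintegral_union measurableSet_Ioi (Ioc_disjoint_Ioi le_rfl),
    ← setLIntegral_congr Ioo_ae_eq_Ioc,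
    setLIntegral_congr_fun measurableSet_Ioo
      fun u hu => restrict_Ioc_lt_rearr_of_lt hh hfin hu.2,
    setLIntegral_congr_fun measurableSet_Ioi
      fun u hu => restrict_Ioc_lt_rearr_of_le hh hfin ht (le_of_lt hu),
    setLIntegral_const, Real.volume_Ioo, sub_zero, mul_comm]

end Rearrangement

/-- `t (f^{**}(t) - f^*(t)) = ∫_{f^*(t)}^∞ λ_f(u) du`, where `λ_f` is the
distribution function and `f^{**}(t) = (1/t)∫_0^t f^*`. -/
theorem stmt17 {α : Type*} [MeasurableSpace α] (μ : Measure α) (f : α → ℝ)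
    (hmeas : Measurable f)
    (hfin : ∀ s : ℝ, 0 < s → μ {x | s < |f x|} < ⊤)
    (hint : ∀ t, 0 < t → IntegrableOn (rearr μ (fun x => |f x|)) (Ioc 0 t))
    (t : ℝ) (ht : 0 < t) :
    t * ((1/t) * (∫ s in Ioc (0:ℝ) t, rearr μ (fun x => |f x|) s)
          - rearr μ (fun x => |f x|) t)
      = ∫ u in Ioi (rearr μ (fun x => |f x|) t), (μ {x | u < |f x|}).toReal := by
  set a := rearr μ (fun x => |f x|) t
  have hlayer := setLIntegral_Ioc_rearr hmeas.abs ⟨1, (hfin 1 one_pos).ne⟩ ht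
  have htail_fin : ∫⁻ u in Ioi a, μ {x | u < |f x|} ≠ ∞ := by
    refine ne_top_of_le_ne_top (hint t ht).lintegral_lt_top.ne ?_
    rw [hlayer]
    exact le_add_self
  have htail : ∫ u in Ioi a, (μ {x | u < |f x|}).toReal
      = (∫⁻ u in Ioi a, μ {x | u < |f x|}).toReal :=
    integral_toReal antitone_measure_lt.measurable.aemeasurable <|
      (ae_restrict_iff' measurableSet_Ioi).2 <| ae_of_all _ fun u hu =>
        hfin u ((rearr_nonneg μ _ t).trans_lt hu)
  rw [integral_eq_lintegral_of_nonneg_ae (ae_of_all _ (rearr_nonneg μ _)) (hint t ht).1, hlayer,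
    ENNReal.toReal_add (by finiteness) htail_fin, htail, ENNReal.toReal_mul,
    ENNReal.toReal_ofReal ht.le, ENNReal.toReal_ofReal (rearr_nonneg μ _ t)]
  field_simp
  ring
end

section
/- Let $f$ be a measurable function on a finite measure space $(\Omega,\mu)$ with $\mu(\Omega) = m < \infty$, and suppose $\|f\|_{L(\infty,\infty)} := \sup_{t>0}(f^{**}(t) - f^*(t)) < \infty$ and $\lambda_f(s) \to 0$ as $s \to \infty$. Then $f \in L^1$ and $\|f\|_{L^1} \leq m\, \|f\|_{L(\infty,\infty)}$. -/
open Set MeasureTheory Filter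

/-- On a measure space of total measure `m < ∞`, if
`f^{**}(t) - f^*(t) ≤ N` for all `t > 0` and `λ_f(s) → 0` as `s → ∞`,
then `f ∈ L¹` and `‖f‖_{L¹} ≤ m N`. -/
theorem stmt18 {α : Type*} [MeasurableSpace α] (μ : Measure α) (f : α → ℝ)
    (m N : ℝ) (hmeas : Measurable f) (hm : 0 < m)
    (hμ : μ univ = ENNReal.ofReal m) (hN : 0 ≤ N)
    (hint : ∀ t, 0 < t → IntegrableOn (rearr μ (fun x => |f x|)) (Ioc 0 t))
    (hsup : ∀ t, 0 < t →
      (1/t) * (∫ s in Ioc (0:ℝ) t, rearr μ (fun x => |f x|) s)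
        - rearr μ (fun x => |f x|) t ≤ N)
    (hlam : Tendsto (fun s => μ {x | s < |f x|}) atTop (nhds 0)) :
    Integrable f μ ∧ ∫ x, |f x| ∂μ ≤ m * N := by
  set g := rearr μ (fun x => |f x|) with hgdef
  set lam := fun s : ℝ => μ {x | s < |f x|} with hlamdef
  have hSet : ∀ u : ℝ, g u = sInf {s : ℝ | 0 ≤ s ∧ lam s ≤ ENNReal.ofReal u} := by
    intro u; simp [hgdef, rearr, hlamdef]
  have hg_nonneg : ∀ u, 0 ≤ g u := by
    intro u; rw [hSet]; exact Real.sInf_nonneg fun x hx => hx.1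
  have hS_ne : ∀ u : ℝ, 0 < u →
      ({s : ℝ | 0 ≤ s ∧ lam s ≤ ENNReal.ofReal u}).Nonempty := by
    intro u hu
    have h1 : ∀ᶠ s in atTop, lam s < ENNReal.ofReal u :=
      hlam.eventually_lt_const (ENNReal.ofReal_pos.2 hu)
    obtain ⟨s, hs1, hs2⟩ := (h1.and (eventually_ge_atTop (0:ℝ))).exists
    exact ⟨s, hs2, hs1.le⟩
  have lam_anti : Antitone lam := fun s s' h =>
    measure_mono fun x hx => lt_of_le_of_lt h hx
  have lam_fin : ∀ s, lam s ≤ ENNReal.ofReal m := fun s =>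
    hμ ▸ measure_mono (subset_univ _)
  -- key property: if `ofReal u < lam s` then `s ≤ g u`
  have key : ∀ s u : ℝ, 0 < u → ENNReal.ofReal u < lam s → s ≤ g u := by
    intro s u hu hlt
    rw [hSet]
    refine le_csInf (hS_ne u hu) ?_
    rintro s' ⟨hs'0, hs'⟩
    by_contra h
    push_neg at h
    exact absurd (le_trans (lam_anti h.le) hs') (not_le.2 hlt)
  -- g vanishes beyond m
  have hzero : ∀ u, m ≤ u → g u = 0 := by
    intro u hu
    refine le_antisymm ?_ (hg_nonneg u)
    rw [hSet]
    refine csInf_le ⟨0, fun x hx => hx.1⟩ ⟨le_refl 0, ?_⟩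
    exact (lam_fin 0).trans (ENNReal.ofReal_le_ofReal hu)
  -- antitone on positives
  have g_anti : ∀ u v : ℝ, 0 < u → u ≤ v → g v ≤ g u := by
    intro u v hu huv
    rw [hSet, hSet]
    refine csInf_le_csInf ⟨0, fun x hx => hx.1⟩ (hS_ne u hu) ?_
    rintro s ⟨hs0, hs⟩
    exact ⟨hs0, hs.trans (ENNReal.ofReal_le_ofReal huv)⟩
  -- measurability of g on Ioi 0 via an antitone extension
  set h : ℝ → ENNReal := fun u => if u ≤ 0 then ⊤ else ENNReal.ofReal (g u) with hhdef
  have h_anti : Antitone h := by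
    intro u v huv
    by_cases hu : u ≤ 0
    · simp [hhdef, hu]
    · have hv : ¬ v ≤ 0 := fun hv => hu (huv.trans hv)
      simp only [hhdef, hu, hv, if_false]
      exact ENNReal.ofReal_le_ofReal (g_anti u v (not_le.1 hu) huv)
  have h_meas : Measurable h := h_anti.measurable
  set ν : Measure ℝ := (volume : Measure ℝ).restrict (Ioi 0) with hνdef
  have g_ae : g =ᵐ[ν] fun u => (h u).toReal := by
    filter_upwards [ae_restrict_mem measurableSet_Ioi] with u hu
    simp [hhdef, not_le.2 (mem_Ioi.1 hu), ENNReal.toReal_ofReal (hg_nonneg u)]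
  have g_aemeas : AEMeasurable g ν :=
    (h_meas.ennreal_toReal.aemeasurable).congr g_ae.symm
  -- layer cake for g
  have lcg : ∫⁻ u, ENNReal.ofReal (g u) ∂ν = ∫⁻ s in Ioi 0, ν {u | s ≤ g u} :=
    lintegral_eq_lintegral_meas_le ν (Eventually.of_forall hg_nonneg) g_aemeas
  -- pointwise bound  lam s ≤ ν {u | s ≤ g u}
  have hpt : ∀ s : ℝ, 0 < s → lam s ≤ ν {u | s ≤ g u} := by
    intro s hs
    have hfin : lam s ≠ ⊤ := ((lam_fin s).trans_lt ENNReal.ofReal_lt_top).ne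
    have hsub : Ioo (0:ℝ) (lam s).toReal ⊆ {u | s ≤ g u} := by
      rintro u ⟨hu0, hu⟩
      exact key s u hu0 ((ENNReal.ofReal_lt_iff_lt_toReal hu0.le hfin).2 hu)
    calc lam s = volume (Ioo (0:ℝ) (lam s).toReal) := by
          rw [Real.volume_Ioo, sub_zero, ENNReal.ofReal_toReal hfin]
      _ = ν (Ioo (0:ℝ) (lam s).toReal) := by
          rw [hνdef, Measure.restrict_apply measurableSet_Ioo,
            inter_eq_self_of_subset_left Ioo_subset_Ioi_self]
      _ ≤ ν {u | s ≤ g u} := measure_mono hsub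
  -- the chain
  have step1 : ∫⁻ x, ENNReal.ofReal |f x| ∂μ = ∫⁻ s in Ioi 0, lam s :=
    lintegral_eq_lintegral_meas_lt μ (Eventually.of_forall fun x => abs_nonneg _)
      hmeas.abs.aemeasurable
  have step2 : ∫⁻ s in Ioi 0, lam s ≤ ∫⁻ s in Ioi 0, ν {u | s ≤ g u} := by
    refine lintegral_mono_ae ?_
    filter_upwards [ae_restrict_mem measurableSet_Ioi] with s hs using hpt s hs
  have step4 : ∫⁻ u, ENNReal.ofReal (g u) ∂ν = ∫⁻ u in Ioc 0 m, ENNReal.ofReal (g u) := by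
    rw [hνdef, show Ioi (0:ℝ) = Ioc 0 m ∪ Ioi m from (Ioc_union_Ioi_eq_Ioi hm.le).symm,
      lintegral_union measurableSet_Ioi (Ioc_disjoint_Ioi le_rfl)]
    have : ∫⁻ u in Ioi m, ENNReal.ofReal (g u) = 0 := by
      rw [setLIntegral_congr_fun_ae measurableSet_Ioi
        (Eventually.of_forall fun u hu => by
          rw [hzero u (le_of_lt (mem_Ioi.1 hu)), ENNReal.ofReal_zero])]
      simp
    rw [this, add_zero]
  have step5 : ∫⁻ u in Ioc 0 m, ENNReal.ofReal (g u)
      = ENNReal.ofReal (∫ u in Ioc (0:ℝ) m, g u) :=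
    (ofReal_integral_eq_lintegral_ofReal (hint m hm)
      (Eventually.of_forall hg_nonneg)).symm
  have step6 : ∫ u in Ioc (0:ℝ) m, g u ≤ m * N := by
    have h1 := hsup m hm
    rw [hzero m le_rfl, sub_zero] at h1
    have h2 : (1/m) * (∫ u in Ioc (0:ℝ) m, g u) * m ≤ N * m :=
      mul_le_mul_of_nonneg_right h1 hm.le
    rw [one_div, inv_mul_eq_div, div_mul_cancel₀] at h2
    · linarith
    · exact hm.ne'
  have total : ∫⁻ x, ENNReal.ofReal |f x| ∂μ ≤ ENNReal.ofReal (m * N) := by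
    calc ∫⁻ x, ENNReal.ofReal |f x| ∂μ ≤ ∫⁻ u, ENNReal.ofReal (g u) ∂ν := by
          rw [step1, lcg]; exact step2
      _ = ENNReal.ofReal (∫ u in Ioc (0:ℝ) m, g u) := by rw [step4, step5]
      _ ≤ ENNReal.ofReal (m * N) := ENNReal.ofReal_le_ofReal step6
  have hInt : Integrable f μ := by
    refine ⟨hmeas.aestronglyMeasurable, ?_⟩
    rw [hasFiniteIntegral_iff_norm]
    calc (∫⁻ x, ENNReal.ofReal ‖f x‖ ∂μ) = ∫⁻ x, ENNReal.ofReal |f x| ∂μ := by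
          simp [Real.norm_eq_abs]
      _ ≤ ENNReal.ofReal (m * N) := total
      _ < ⊤ := ENNReal.ofReal_lt_top
  refine ⟨hInt, ?_⟩
  rw [integral_eq_lintegral_of_nonneg_ae (Eventually.of_forall fun x => abs_nonneg _)
    hmeas.abs.aestronglyMeasurable]
  exact ENNReal.toReal_le_of_le_ofReal (mul_nonneg hm.le hN) total
end
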